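/- arXiv:2010.15532 — 9 statements merged into one kernel-verified Lean document; each statement's English description precedes it below -/
import Mathlib

section
/- Let r ∈ [0,1) and let (q₁, q₂) be a frozen planet configuration for parameter r. Then q₁'(t) > 0 for every t ∈ (0,1); in particular q₁ is strictly monotone increasing on [0,1]. -/
open Set

/-- The mean value of a function over the interval `[0,1]`. -/
noncomputable def meanVal (q : ℝ → ℝ) : ℝ := ∫ t in (0:ℝ)..1, q t

/-- A frozen planet configuration for the interpolation parameter `r` between
instantaneous (`r = 0`) and mean (`r = 1`) interactions:
`q₁ ∈ C^∞([0,1],(0,∞))`, `q₂ ∈ C⁰([0,1],[0,∞)) ∩ C^∞([0,1),(0,∞))` satisfying the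
coupled (delay) differential equations, the ordering `q₂ < q₁`, and the boundary
conditions `q₁'(0) = q₁'(1) = q₂'(0) = 0`, `q₂(1) = 0`. -/
structure FrozenPlanetConfig (r : ℝ) where
  q₁ : ℝ → ℝ
  q₂ : ℝ → ℝ
  q₁_smooth : ContDiffOn ℝ (⊤ : ℕ∞) q₁ (Set.Icc 0 1)
  q₁_pos : ∀ t ∈ Set.Icc (0:ℝ) 1, 0 < q₁ t
  q₂_cont : ContinuousOn q₂ (Set.Icc 0 1)
  q₂_nonneg : ∀ t ∈ Set.Icc (0:ℝ) 1, 0 ≤ q₂ t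
  q₂_smooth : ContDiffOn ℝ (⊤ : ℕ∞) q₂ (Set.Ico 0 1)
  q₂_pos : ∀ t ∈ Set.Ico (0:ℝ) 1, 0 < q₂ t
  ode₁ : ∀ t ∈ Set.Icc (0:ℝ) 1,
    deriv (deriv q₁) t =
      -2 / (q₁ t) ^ 2 + r / (meanVal q₁ - meanVal q₂) ^ 2
        + (1 - r) / (q₁ t - q₂ t) ^ 2
  ode₂ : ∀ t ∈ Set.Ico (0:ℝ) 1,
    deriv (deriv q₂) t =
      -2 / (q₂ t) ^ 2 - r / (meanVal q₁ - meanVal q₂) ^ 2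
        - (1 - r) / (q₁ t - q₂ t) ^ 2
  q₂_lt_q₁ : ∀ t ∈ Set.Icc (0:ℝ) 1, q₂ t < q₁ t
  bc₁ : deriv q₁ 0 = 0
  bc₂ : deriv q₁ 1 = 0
  bc₃ : deriv q₂ 0 = 0
  bc₄ : q₂ 1 = 0

open Filter Topology

namespace FPAux

variable {r : ℝ} (cfg : FrozenPlanetConfig r)

/-- The mean-interaction constant. -/
noncomputable def Cc : ℝ := r / (meanVal cfg.q₁ - meanVal cfg.q₂) ^ 2

/-- Right-hand side of the ODE for `q₁` (the second derivative of `q₁`). -/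
noncomputable def GG : ℝ → ℝ := fun t =>
  -2 / (cfg.q₁ t) ^ 2 + Cc cfg + (1 - r) / (cfg.q₁ t - cfg.q₂ t) ^ 2

/-- Right-hand side of the ODE for `q₂`. -/
noncomputable def RR : ℝ → ℝ := fun t =>
  -2 / (cfg.q₂ t) ^ 2 - Cc cfg - (1 - r) / (cfg.q₁ t - cfg.q₂ t) ^ 2

noncomputable def vv : ℝ → ℝ := fun t => deriv cfg.q₁ t
noncomputable def zz : ℝ → ℝ := fun t => -deriv cfg.q₂ t
noncomputable def ww : ℝ → ℝ := fun t => deriv cfg.q₁ t - deriv cfg.q₂ t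
noncomputable def vt : ℝ → ℝ := derivWithin cfg.q₁ (Set.Icc 0 1)
noncomputable def gg : ℝ → ℝ := fun t => cfg.q₁ t - cfg.q₂ t
noncomputable def psi : ℝ → ℝ := fun t => GG cfg t - RR cfg t

lemma Cc_nonneg (hr : 0 ≤ r) : 0 ≤ Cc cfg := div_nonneg hr (sq_nonneg _)

lemma gg_pos : ∀ t ∈ Icc (0:ℝ) 1, 0 < gg cfg t := fun t ht =>
  sub_pos.2 (cfg.q₂_lt_q₁ t ht)

lemma ode₁' : ∀ t ∈ Icc (0:ℝ) 1, deriv (deriv cfg.q₁) t = GG cfg t := cfg.ode₁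

lemma ode₂' : ∀ t ∈ Ico (0:ℝ) 1, deriv (deriv cfg.q₂) t = RR cfg t := cfg.ode₂

lemma RR_neg (hr : 0 ≤ r ∧ r < 1) : ∀ t ∈ Ico (0:ℝ) 1, RR cfg t < 0 := by
  intro t ht
  have h2 : 0 < cfg.q₂ t := cfg.q₂_pos t ht
  have hg : 0 < gg cfg t := gg_pos cfg t (Ico_subset_Icc_self ht)
  have h1 : 0 < 2 / (cfg.q₂ t) ^ 2 := by positivity
  have h3 : 0 ≤ (1 - r) / (gg cfg t) ^ 2 := by
    have : 0 ≤ 1 - r := by linarith [hr.2]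
    positivity
  have h4 : 0 ≤ Cc cfg := Cc_nonneg cfg hr.1
  show -2 / (cfg.q₂ t) ^ 2 - Cc cfg - (1 - r) / (cfg.q₁ t - cfg.q₂ t) ^ 2 < 0
  have hgg : (1 - r) / (cfg.q₁ t - cfg.q₂ t) ^ 2 = (1 - r) / (gg cfg t) ^ 2 := rfl
  rw [hgg, neg_div]
  linarith

/-- Smoothness of `q₁` on the open interval. -/
lemma q₁_smooth_open : ContDiffOn ℝ (⊤ : ℕ∞) cfg.q₁ (Ioo 0 1) :=
  cfg.q₁_smooth.mono Ioo_subset_Icc_self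

lemma q₂_smooth_open : ContDiffOn ℝ (⊤ : ℕ∞) cfg.q₂ (Ioo 0 1) :=
  cfg.q₂_smooth.mono Ioo_subset_Ico_self

lemma diff_q₁ : ∀ t ∈ Ioo (0:ℝ) 1, DifferentiableAt ℝ cfg.q₁ t := fun t ht =>
  ((q₁_smooth_open cfg t ht).differentiableWithinAt (by simp)).differentiableAt
    ((isOpen_Ioo).mem_nhds ht)

lemma diff_q₂ : ∀ t ∈ Ioo (0:ℝ) 1, DifferentiableAt ℝ cfg.q₂ t := fun t ht =>
  ((q₂_smooth_open cfg t ht).differentiableWithinAt (by simp)).differentiableAt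
    ((isOpen_Ioo).mem_nhds ht)

lemma diff_dq₁ : ∀ t ∈ Ioo (0:ℝ) 1, DifferentiableAt ℝ (deriv cfg.q₁) t := by
  intro t ht
  have h := (q₁_smooth_open cfg).deriv_of_isOpen (m := (⊤ : ℕ∞)) isOpen_Ioo (by simp)
  exact ((h t ht).differentiableWithinAt (by simp)).differentiableAt
    ((isOpen_Ioo).mem_nhds ht)

lemma diff_dq₂ : ∀ t ∈ Ioo (0:ℝ) 1, DifferentiableAt ℝ (deriv cfg.q₂) t := by
  intro t ht
  have h := (q₂_smooth_open cfg).deriv_of_isOpen (m := (⊤ : ℕ∞)) isOpen_Ioo (by simp)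
  exact ((h t ht).differentiableWithinAt (by simp)).differentiableAt
    ((isOpen_Ioo).mem_nhds ht)

lemma hasDerivAt_vv : ∀ t ∈ Ioo (0:ℝ) 1, HasDerivAt (vv cfg) (GG cfg t) t := by
  intro t ht
  have := (diff_dq₁ cfg t ht).hasDerivAt
  rwa [ode₁' cfg t (Ioo_subset_Icc_self ht)] at this

lemma hasDerivAt_zz : ∀ t ∈ Ioo (0:ℝ) 1, HasDerivAt (zz cfg) (-(RR cfg t)) t := by
  intro t ht
  have h := (diff_dq₂ cfg t ht).hasDerivAt
  rw [ode₂' cfg t (Ioo_subset_Ico_self ht)] at h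
  exact h.neg

lemma hasDerivAt_ww : ∀ t ∈ Ioo (0:ℝ) 1, HasDerivAt (ww cfg) (psi cfg t) t := by
  intro t ht
  have h1 := (diff_dq₁ cfg t ht).hasDerivAt
  have h2 := (diff_dq₂ cfg t ht).hasDerivAt
  rw [ode₁' cfg t (Ioo_subset_Icc_self ht)] at h1
  rw [ode₂' cfg t (Ioo_subset_Ico_self ht)] at h2
  exact h1.sub h2

lemma hasDerivAt_gg : ∀ t ∈ Ioo (0:ℝ) 1, HasDerivAt (gg cfg) (ww cfg t) t := fun t ht =>
  ((diff_q₁ cfg t ht).hasDerivAt).sub ((diff_q₂ cfg t ht).hasDerivAt)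

lemma psi_pos (hr : 0 ≤ r ∧ r < 1) : ∀ t ∈ Ioo (0:ℝ) 1, 0 < psi cfg t := by
  intro t ht
  have ht' : t ∈ Icc (0:ℝ) 1 := Ioo_subset_Icc_self ht
  have h2 : 0 < cfg.q₂ t := cfg.q₂_pos t (Ioo_subset_Ico_self ht)
  have h1 : 0 < cfg.q₁ t := cfg.q₁_pos t ht'
  have h21 : cfg.q₂ t < cfg.q₁ t := cfg.q₂_lt_q₁ t ht'
  have hg : 0 < gg cfg t := gg_pos cfg t ht'
  have hC : 0 ≤ Cc cfg := Cc_nonneg cfg hr.1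
  have hr1 : 0 ≤ 1 - r := by linarith [hr.2]
  have key : 2 / (cfg.q₁ t) ^ 2 < 2 / (cfg.q₂ t) ^ 2 := by
    apply div_lt_div_of_pos_left (by norm_num) (by positivity)
    exact pow_lt_pow_left₀ h21 h2.le (by norm_num)
  have hpos : 0 ≤ (1 - r) / (gg cfg t) ^ 2 := by positivity
  show 0 < GG cfg t - RR cfg t
  show 0 < (-2 / (cfg.q₁ t) ^ 2 + Cc cfg + (1 - r) / (cfg.q₁ t - cfg.q₂ t) ^ 2)
      - (-2 / (cfg.q₂ t) ^ 2 - Cc cfg - (1 - r) / (cfg.q₁ t - cfg.q₂ t) ^ 2)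
  have hgg : (1 - r) / (cfg.q₁ t - cfg.q₂ t) ^ 2 = (1 - r) / (gg cfg t) ^ 2 := rfl
  rw [hgg, neg_div, neg_div]
  linarith

end FPAux

namespace FPAux2
open FPAux

variable {r : ℝ} (cfg : FrozenPlanetConfig r)

/-- If a stated second derivative is nonzero, the first derivative is genuinely
differentiable (otherwise `deriv` would be the junk value `0`). -/
lemma force_diff {f : ℝ → ℝ} {x L : ℝ} (hode : deriv (deriv f) x = L) (hL : L ≠ 0) :
    DifferentiableAt ℝ (deriv f) x := by
  by_contra h
  rw [deriv_zero_of_not_differentiableAt h] at hode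
  exact hL hode.symm

/-- Forced genuineness of `q₂' (0) = 0` : the velocity of the inner electron tends to `0`
at `0⁺`. -/
lemma zz_lim0 (hr : 0 ≤ r ∧ r < 1) : Tendsto (zz cfg) (𝓝[>] (0:ℝ)) (𝓝 0) := by
  have h0 : (0:ℝ) ∈ Ico (0:ℝ) 1 := ⟨le_refl _, one_pos⟩
  have hL : RR cfg 0 < 0 := RR_neg cfg hr 0 h0
  have hdiff : DifferentiableAt ℝ (deriv cfg.q₂) 0 :=
    force_diff (ode₂' cfg 0 h0) (ne_of_lt hL)
  have hcont : Tendsto (deriv cfg.q₂) (𝓝 0) (𝓝 (deriv cfg.q₂ 0)) :=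
    hdiff.continuousAt
  rw [cfg.bc₃] at hcont
  have : Tendsto (zz cfg) (𝓝 0) (𝓝 (-0)) := hcont.neg
  rw [neg_zero] at this
  exact this.mono_left nhdsWithin_le_nhds

lemma vt_cont : ContinuousOn (vt cfg) (Icc 0 1) :=
  cfg.q₁_smooth.continuousOn_derivWithin (uniqueDiffOn_Icc one_pos) (by simp)

lemma vt_eq : ∀ t ∈ Ioo (0:ℝ) 1, vt cfg t = vv cfg t := fun t ht =>
  derivWithin_of_mem_nhds (Icc_mem_nhds ht.1 ht.2)

lemma vt_lim0 : Tendsto (vv cfg) (𝓝[>] (0:ℝ)) (𝓝 (vt cfg 0)) := by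
  have h := (vt_cont cfg 0 ⟨le_refl _, zero_le_one⟩)
  have h2 : Tendsto (vt cfg) (𝓝[Ioo (0:ℝ) 1] 0) (𝓝 (vt cfg 0)) :=
    h.mono_left (nhdsWithin_mono _ Ioo_subset_Icc_self)
  rw [nhdsWithin_Ioo_eq_nhdsGT one_pos] at h2
  apply h2.congr'
  filter_upwards [self_mem_nhdsWithin,
    mem_nhdsWithin_of_mem_nhds (Iio_mem_nhds one_pos)] with t ht ht1
  exact vt_eq cfg t ⟨ht, ht1⟩

lemma vt_lim1 : Tendsto (vv cfg) (𝓝[<] (1:ℝ)) (𝓝 (vt cfg 1)) := by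
  have h := (vt_cont cfg 1 ⟨zero_le_one, le_refl _⟩)
  have h2 : Tendsto (vt cfg) (𝓝[Ioo (0:ℝ) 1] 1) (𝓝 (vt cfg 1)) :=
    h.mono_left (nhdsWithin_mono _ Ioo_subset_Icc_self)
  rw [nhdsWithin_Ioo_eq_nhdsLT one_pos] at h2
  apply h2.congr'
  filter_upwards [self_mem_nhdsWithin,
    mem_nhdsWithin_of_mem_nhds (Ioi_mem_nhds zero_lt_one)] with t ht ht1
  exact vt_eq cfg t ⟨ht1, ht⟩

end FPAux2

namespace FPAux3
open FPAux FPAux2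

variable {r : ℝ} (cfg : FrozenPlanetConfig r)

/-- Left dichotomy: either the (one-sided) derivative of `q₁` at `0` vanishes, or the
right-hand side of the ODE vanishes at `0`. -/
lemma left_dichotomy (hG : GG cfg 0 ≠ 0) : vt cfg 0 = 0 := by
  have h0 : (0:ℝ) ∈ Icc (0:ℝ) 1 := ⟨le_refl _, zero_le_one⟩
  have hdiff : DifferentiableAt ℝ (deriv cfg.q₁) 0 := force_diff (ode₁' cfg 0 h0) hG
  have hcont : Tendsto (deriv cfg.q₁) (𝓝 0) (𝓝 (deriv cfg.q₁ 0)) := hdiff.continuousAt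
  rw [cfg.bc₁] at hcont
  have h1 : Tendsto (vv cfg) (𝓝[>] (0:ℝ)) (𝓝 0) := hcont.mono_left nhdsWithin_le_nhds
  exact tendsto_nhds_unique (vt_lim0 cfg) h1

lemma right_dichotomy (hG : GG cfg 1 ≠ 0) : vt cfg 1 = 0 := by
  have h1' : (1:ℝ) ∈ Icc (0:ℝ) 1 := ⟨zero_le_one, le_refl _⟩
  have hdiff : DifferentiableAt ℝ (deriv cfg.q₁) 1 := force_diff (ode₁' cfg 1 h1') hG
  have hcont : Tendsto (deriv cfg.q₁) (𝓝 1) (𝓝 (deriv cfg.q₁ 1)) := hdiff.continuousAt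
  rw [cfg.bc₂] at hcont
  have h1 : Tendsto (vv cfg) (𝓝[<] (1:ℝ)) (𝓝 0) := hcont.mono_left nhdsWithin_le_nhds
  exact tendsto_nhds_unique (vt_lim1 cfg) h1

lemma cont_zz : ContinuousOn (zz cfg) (Ioo 0 1) := fun t ht =>
  ((hasDerivAt_zz cfg t ht).differentiableAt.continuousAt).continuousWithinAt

lemma cont_ww : ContinuousOn (ww cfg) (Ioo 0 1) := fun t ht =>
  ((hasDerivAt_ww cfg t ht).differentiableAt.continuousAt).continuousWithinAt

/-- `w = g'` is strictly monotone on `(0,1)` (strict convexity of `q₁ - q₂`). -/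
lemma ww_strictMono (hr : 0 ≤ r ∧ r < 1) : StrictMonoOn (ww cfg) (Ioo 0 1) := by
  apply strictMonoOn_of_deriv_pos (convex_Ioo 0 1) (cont_ww cfg)
  intro t ht
  rw [interior_Ioo] at ht
  rw [(hasDerivAt_ww cfg t ht).deriv]
  exact psi_pos cfg hr t ht

/-- `z = -q₂'` is strictly monotone on `(0,1)`. -/
lemma zz_strictMono (hr : 0 ≤ r ∧ r < 1) : StrictMonoOn (zz cfg) (Ioo 0 1) := by
  apply strictMonoOn_of_deriv_pos (convex_Ioo 0 1) (cont_zz cfg)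
  intro t ht
  rw [interior_Ioo] at ht
  rw [(hasDerivAt_zz cfg t ht).deriv]
  have := RR_neg cfg hr t (Ioo_subset_Ico_self ht)
  linarith

/-- `z > 0` on `(0,1)` : the inner electron is strictly falling. -/
lemma zz_pos (hr : 0 ≤ r ∧ r < 1) : ∀ t ∈ Ioo (0:ℝ) 1, 0 < zz cfg t := by
  have zmono := zz_strictMono cfg hr
  have hnn : ∀ s ∈ Ioo (0:ℝ) 1, 0 ≤ zz cfg s := by
    intro s hs
    have hev : ∀ᶠ u in 𝓝[>] (0:ℝ), zz cfg u ≤ zz cfg s := by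
      filter_upwards [self_mem_nhdsWithin,
        mem_nhdsWithin_of_mem_nhds (Iio_mem_nhds hs.1)] with u hu hus
      exact (zmono ⟨hu, lt_trans hus hs.2⟩ hs hus).le
    exact le_of_tendsto (zz_lim0 cfg hr) hev
  intro t ht
  obtain ⟨s, hs⟩ := exists_between ht.1
  have hsmem : s ∈ Ioo (0:ℝ) 1 := ⟨hs.1, lt_trans hs.2 ht.2⟩
  exact lt_of_le_of_lt (hnn s hsmem) (zmono hsmem ht hs.2)

/-- Strict decrease of `q₁` on intervals where `v < 0`. -/
lemma q₁_anti {a b : ℝ} (ha : 0 ≤ a) (hb : b ≤ 1)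
    (hv : ∀ t ∈ Ioo a b, vv cfg t < 0) : StrictAntiOn cfg.q₁ (Icc a b) := by
  apply strictAntiOn_of_deriv_neg (convex_Icc a b)
    (cfg.q₁_smooth.continuousOn.mono (Icc_subset_Icc ha hb))
  intro t ht
  rw [interior_Icc] at ht
  exact hv t ht

/-- Strict decrease of `q₂` on subintervals of `[0,1)`. -/
lemma q₂_anti (hr : 0 ≤ r ∧ r < 1) {a b : ℝ} (ha : 0 ≤ a) (hb : b ≤ 1) :
    StrictAntiOn cfg.q₂ (Icc a b) := by
  apply strictAntiOn_of_deriv_neg (convex_Icc a b)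
    (cfg.q₂_cont.mono (Icc_subset_Icc ha hb))
  intro t ht
  rw [interior_Icc] at ht
  have htm : t ∈ Ioo (0:ℝ) 1 := ⟨lt_of_le_of_lt ha ht.1, lt_of_lt_of_le ht.2 hb⟩
  have := zz_pos cfg hr t htm
  show deriv cfg.q₂ t < 0
  have hz : zz cfg t = -deriv cfg.q₂ t := rfl
  linarith [hz ▸ this]

lemma gg_mono (hr : 0 ≤ r ∧ r < 1) {a b : ℝ} (ha : 0 ≤ a) (hb : b ≤ 1)
    (hw : ∀ t ∈ Ioo a b, 0 < ww cfg t) : StrictMonoOn (gg cfg) (Icc a b) := by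
  apply strictMonoOn_of_deriv_pos (convex_Icc a b)
  · exact (cfg.q₁_smooth.continuousOn.sub cfg.q₂_cont).mono (Icc_subset_Icc ha hb)
  intro t ht
  rw [interior_Icc] at ht
  have htm : t ∈ Ioo (0:ℝ) 1 := ⟨lt_of_le_of_lt ha ht.1, lt_of_lt_of_le ht.2 hb⟩
  rw [(hasDerivAt_gg cfg t htm).deriv]
  exact hw t ht

lemma gg_anti (hr : 0 ≤ r ∧ r < 1) {a b : ℝ} (ha : 0 ≤ a) (hb : b ≤ 1)
    (hw : ∀ t ∈ Ioo a b, ww cfg t < 0) : StrictAntiOn (gg cfg) (Icc a b) := by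
  apply strictAntiOn_of_deriv_neg (convex_Icc a b)
  · exact (cfg.q₁_smooth.continuousOn.sub cfg.q₂_cont).mono (Icc_subset_Icc ha hb)
  intro t ht
  rw [interior_Icc] at ht
  have htm : t ∈ Ioo (0:ℝ) 1 := ⟨lt_of_le_of_lt ha ht.1, lt_of_lt_of_le ht.2 hb⟩
  rw [(hasDerivAt_gg cfg t htm).deriv]
  exact hw t ht

/-- Mean value theorem for `q₁'` expressed via the endpoint-extended derivative `vt`. -/
lemma mvt_vt {a b : ℝ} (ha : 0 ≤ a) (hab : a < b) (hb : b ≤ 1) :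
    ∃ ξ ∈ Ioo a b, GG cfg ξ = (vt cfg b - vt cfg a) / (b - a) := by
  apply exists_hasDerivAt_eq_slope (vt cfg) (GG cfg) hab
  · exact (vt_cont cfg).mono (Icc_subset_Icc ha hb)
  · intro x hx
    have hxm : x ∈ Ioo (0:ℝ) 1 := ⟨lt_of_le_of_lt ha hx.1, lt_of_lt_of_le hx.2 hb⟩
    have h := hasDerivAt_vv cfg x hxm
    have heq : vt cfg =ᶠ[𝓝 x] vv cfg := by
      filter_upwards [(isOpen_Ioo).mem_nhds hxm] with u hu
      exact vt_eq cfg u hu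
    exact heq.hasDerivAt_iff.2 h

/-- The two-point strict decrease of `G` on intervals where `v < 0 < w`. -/
lemma GG_anti (hr : 0 ≤ r ∧ r < 1) {a b : ℝ} (ha : 0 ≤ a) (hb : b ≤ 1)
    (hv : ∀ t ∈ Ioo a b, vv cfg t < 0) (hw : ∀ t ∈ Ioo a b, 0 < ww cfg t)
    {s t : ℝ} (hs : s ∈ Ioo a b) (ht : t ∈ Ioo a b) (hst : s < t) :
    GG cfg t < GG cfg s := by
  have hsI : s ∈ Icc a b := Ioo_subset_Icc_self hs
  have htI : t ∈ Icc a b := Ioo_subset_Icc_self ht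
  have hs1 : s ∈ Icc (0:ℝ) 1 := ⟨le_trans ha hsI.1, le_trans hsI.2 hb⟩
  have ht1 : t ∈ Icc (0:ℝ) 1 := ⟨le_trans ha htI.1, le_trans htI.2 hb⟩
  have hq : cfg.q₁ t < cfg.q₁ s := q₁_anti cfg ha hb hv hsI htI hst
  have hg : gg cfg s < gg cfg t := gg_mono cfg hr ha hb hw hsI htI hst
  have h1t : 0 < cfg.q₁ t := cfg.q₁_pos t ht1
  have hgs : 0 < gg cfg s := gg_pos cfg s hs1
  have hr1 : 0 < 1 - r := by linarith [hr.2]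
  have hN : 2 / (cfg.q₁ s) ^ 2 < 2 / (cfg.q₁ t) ^ 2 := by
    apply div_lt_div_of_pos_left (by norm_num) (by positivity)
    exact pow_lt_pow_left₀ hq h1t.le (by norm_num)
  have hP : (1 - r) / (gg cfg t) ^ 2 < (1 - r) / (gg cfg s) ^ 2 := by
    apply div_lt_div_of_pos_left hr1 (by positivity)
    exact pow_lt_pow_left₀ hg hgs.le (by norm_num)
  show -2 / (cfg.q₁ t) ^ 2 + Cc cfg + (1 - r) / (cfg.q₁ t - cfg.q₂ t) ^ 2 <
    -2 / (cfg.q₁ s) ^ 2 + Cc cfg + (1 - r) / (cfg.q₁ s - cfg.q₂ s) ^ 2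
  have e1 : (1 - r) / (cfg.q₁ t - cfg.q₂ t) ^ 2 = (1 - r) / (gg cfg t) ^ 2 := rfl
  have e2 : (1 - r) / (cfg.q₁ s - cfg.q₂ s) ^ 2 = (1 - r) / (gg cfg s) ^ 2 := rfl
  rw [e1, e2, neg_div, neg_div]
  linarith

end FPAux3

namespace FPAux4
open FPAux FPAux2 FPAux3

variable {r : ℝ} (cfg : FrozenPlanetConfig r)

lemma GG_contOn : ContinuousOn (GG cfg) (Icc 0 1) := by
  have h1 : ContinuousOn (fun t => (-2:ℝ) / (cfg.q₁ t) ^ 2) (Icc 0 1) := by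
    apply continuousOn_const.div (cfg.q₁_smooth.continuousOn.pow 2)
    intro t ht
    exact pow_ne_zero 2 (ne_of_gt (cfg.q₁_pos t ht))
  have h2 : ContinuousOn (fun t => (1 - r) / (cfg.q₁ t - cfg.q₂ t) ^ 2) (Icc 0 1) := by
    apply continuousOn_const.div ((cfg.q₁_smooth.continuousOn.sub cfg.q₂_cont).pow 2)
    intro t ht
    exact pow_ne_zero 2 (ne_of_gt (gg_pos cfg t ht))
  exact (h1.add continuousOn_const).add h2

/-- If `v` vanishes at an interior point but is nonnegative throughout, we get a
contradiction (second derivative test, using `q₂' < 0`). -/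
lemma no_interior_touch (hr : 0 ≤ r ∧ r < 1) {t₀ : ℝ} (ht₀ : t₀ ∈ Ioo (0:ℝ) 1)
    (hv0 : vv cfg t₀ = 0) (hnn : ∀ t ∈ Ioo (0:ℝ) 1, 0 ≤ vv cfg t) : False := by
  have ht₀' : t₀ ∈ Icc (0:ℝ) 1 := Ioo_subset_Icc_self ht₀
  have hq1 : 0 < cfg.q₁ t₀ := cfg.q₁_pos t₀ ht₀'
  have hgpos : 0 < gg cfg t₀ := gg_pos cfg t₀ ht₀'
  have hzpos : 0 < zz cfg t₀ := zz_pos cfg hr t₀ ht₀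
  have hr1 : 0 < 1 - r := by linarith [hr.2]
  -- derivative of GG at t₀
  have hdq1 : HasDerivAt cfg.q₁ (vv cfg t₀) t₀ := (diff_q₁ cfg t₀ ht₀).hasDerivAt
  have hdq2 : HasDerivAt cfg.q₂ (-zz cfg t₀) t₀ := by
    have := (diff_q₂ cfg t₀ ht₀).hasDerivAt
    have hz : deriv cfg.q₂ t₀ = -zz cfg t₀ := by simp [zz]
    rwa [hz] at this
  set dG : ℝ := -(1 - r) * (2 * gg cfg t₀ * zz cfg t₀) / ((gg cfg t₀) ^ 2) ^ 2 with hdG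
  have hGd : HasDerivAt (GG cfg) dG t₀ := by
    have hu1 : HasDerivAt (fun t => (cfg.q₁ t) ^ 2) (2 * cfg.q₁ t₀ ^ 1 * vv cfg t₀) t₀ :=
      hdq1.pow 2
    have hgd : HasDerivAt (gg cfg) (vv cfg t₀ + zz cfg t₀) t₀ := by
      have := hdq1.sub hdq2
      rw [sub_neg_eq_add] at this
      exact this
    have hu2 : HasDerivAt (fun t => (gg cfg t) ^ 2)
        (2 * gg cfg t₀ ^ 1 * (vv cfg t₀ + zz cfg t₀)) t₀ := hgd.pow 2
    have hd1 : HasDerivAt (fun t => (-2:ℝ) / (cfg.q₁ t) ^ 2)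
        ((0 * (cfg.q₁ t₀)^2 - (-2) * (2 * cfg.q₁ t₀ ^ 1 * vv cfg t₀)) / ((cfg.q₁ t₀) ^ 2) ^ 2)
        t₀ := (hasDerivAt_const t₀ (-2:ℝ)).div hu1 (by positivity)
    have hd2 : HasDerivAt (fun t => (1 - r) / (gg cfg t) ^ 2)
        ((0 * (gg cfg t₀)^2 - (1 - r) * (2 * gg cfg t₀ ^ 1 * (vv cfg t₀ + zz cfg t₀))) /
          ((gg cfg t₀) ^ 2) ^ 2) t₀ :=
      (hasDerivAt_const t₀ (1 - r)).div hu2 (by positivity)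
    have hsum := (hd1.add (hasDerivAt_const t₀ (Cc cfg))).add hd2
    have : GG cfg = fun t => (-2 / (cfg.q₁ t) ^ 2 + Cc cfg) + (1 - r) / (gg cfg t) ^ 2 := rfl
    rw [this]
    refine hsum.congr_deriv ?_
    rw [hv0, hdG]
    ring
  have hdGneg : dG < 0 := by
    rw [hdG]
    have : 0 < (1 - r) * (2 * gg cfg t₀ * zz cfg t₀) / ((gg cfg t₀) ^ 2) ^ 2 := by positivity
    rw [neg_mul, neg_div]
    linarith
  -- GG t₀ = 0 by the first derivative test
  have hmin : IsLocalMin (vv cfg) t₀ := by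
    have : ∀ᶠ u in 𝓝 t₀, vv cfg t₀ ≤ vv cfg u := by
      filter_upwards [(isOpen_Ioo).mem_nhds ht₀] with u hu
      rw [hv0]; exact hnn u hu
    exact this
  have hG0 : GG cfg t₀ = 0 := by
    rw [← (hasDerivAt_vv cfg t₀ ht₀).deriv]
    exact hmin.deriv_eq_zero
  -- slopes of GG near t₀ from the left are all < 0, so GG > 0 just left of t₀
  have hslope : Tendsto (fun u => (GG cfg u - GG cfg t₀) / (u - t₀)) (𝓝[≠] t₀) (𝓝 dG) := by
    have := hasDerivAt_iff_tendsto_slope.1 hGd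
    exact this.congr (fun u => slope_def_field _ _ _)
  have hslope' : Tendsto (fun u => (GG cfg u - GG cfg t₀) / (u - t₀)) (𝓝[<] t₀) (𝓝 dG) :=
    hslope.mono_left (nhdsWithin_mono _ fun u hu => ne_of_lt hu)
  have hev : ∀ᶠ u in 𝓝[<] t₀, 0 < GG cfg u := by
    have hlt : ∀ᶠ u in 𝓝[<] t₀, (GG cfg u - GG cfg t₀) / (u - t₀) < 0 :=
      hslope' (Iio_mem_nhds hdGneg)
    filter_upwards [hlt, self_mem_nhdsWithin] with u hu hu'
    have hu0 : u - t₀ < 0 := sub_neg.2 hu'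
    have := mul_pos_of_neg_of_neg hu hu0
    rw [div_mul_cancel₀ _ (ne_of_lt hu0)] at this
    rw [hG0] at this
    linarith
  obtain ⟨c, hc, hcsub⟩ := (mem_nhdsLT_iff_exists_Ioo_subset).1
    (hev.and (eventually_mem_nhdsWithin.mono (fun u hu => hu) |>.and
      (mem_nhdsWithin_of_mem_nhds (Ioi_mem_nhds ht₀.1) : ∀ᶠ u in 𝓝[<] t₀, u ∈ Ioi 0)))
  obtain ⟨sbar, hsbar⟩ := exists_between (max_lt hc ht₀.1 : max c 0 < t₀)
  have hsbar_t₀ : sbar < t₀ := hsbar.2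
  have hsbar_c : c < sbar := lt_of_le_of_lt (le_max_left _ _) hsbar.1
  have hsbar_0 : 0 < sbar := lt_of_le_of_lt (le_max_right _ _) hsbar.1
  have hsbar1 : sbar < 1 := lt_trans hsbar_t₀ ht₀.2
  obtain ⟨ξ, hξ, hξeq⟩ := mvt_vt cfg hsbar_0.le hsbar_t₀ ht₀.2.le
  have hξI : ξ ∈ Ioo c t₀ := ⟨lt_trans hsbar_c hξ.1, hξ.2⟩
  have hξpos := (hcsub hξI).1
  have hvt_t₀ : vt cfg t₀ = 0 := by rw [vt_eq cfg t₀ ht₀, hv0]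
  have hvt_s : vt cfg sbar = vv cfg sbar := vt_eq cfg sbar ⟨hsbar_0, hsbar1⟩
  rw [hvt_t₀, hvt_s] at hξeq
  have hnum : 0 - vv cfg sbar ≤ 0 := by
    have := hnn sbar ⟨hsbar_0, hsbar1⟩; linarith
  have hden : 0 < t₀ - sbar := sub_pos.2 hsbar_t₀
  have : GG cfg ξ ≤ 0 := by
    rw [hξeq]
    exact div_nonpos_of_nonpos_of_nonneg hnum hden.le
  linarith

end FPAux4

namespace FPAux5
open FPAux FPAux2 FPAux3 FPAux4

variable {r : ℝ} (cfg : FrozenPlanetConfig r)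

/-- No interval on which `v < 0` with `v` vanishing at both ends and `g' > 0` inside. -/
lemma neg_interval_two_zeros (hr : 0 ≤ r ∧ r < 1) {a b : ℝ} (ha : 0 ≤ a) (hab : a < b)
    (hb : b ≤ 1) (hva : vt cfg a = 0) (hvb : vt cfg b = 0)
    (hv : ∀ t ∈ Ioo a b, vv cfg t < 0) (hw : ∀ t ∈ Ioo a b, 0 < ww cfg t) : False := by
  set s := (a + b) / 2 with hs
  have hsab : s ∈ Ioo a b := ⟨by linarith, by linarith⟩
  have hs01 : s ∈ Ioo (0:ℝ) 1 := ⟨lt_of_le_of_lt ha hsab.1, lt_of_lt_of_le hsab.2 hb⟩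
  have hvs : vv cfg s < 0 := hv s hsab
  obtain ⟨ξ₁, hξ₁, hξ₁eq⟩ := mvt_vt cfg ha hsab.1 (le_trans hsab.2.le hb)
  obtain ⟨ξ₂, hξ₂, hξ₂eq⟩ := mvt_vt cfg (le_trans ha hsab.1.le) hsab.2 hb
  rw [hva, vt_eq cfg s hs01, sub_zero] at hξ₁eq
  rw [hvb, vt_eq cfg s hs01, zero_sub] at hξ₂eq
  have h1 : GG cfg ξ₁ < 0 := by
    rw [hξ₁eq]
    exact div_neg_of_neg_of_pos hvs (by linarith [hξ₁.1, hξ₁.2])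
  have h2 : 0 < GG cfg ξ₂ := by
    rw [hξ₂eq]
    exact div_pos (by linarith) (by linarith [hξ₂.1, hξ₂.2])
  have hξ₁m : ξ₁ ∈ Ioo a b := ⟨hξ₁.1, lt_trans hξ₁.2 hsab.2⟩
  have hξ₂m : ξ₂ ∈ Ioo a b := ⟨lt_trans hsab.1 hξ₂.1, hξ₂.2⟩
  have := GG_anti cfg hr ha hb hv hw hξ₁m hξ₂m (lt_trans hξ₁.2 hξ₂.1)
  linarith

/-- No interval `(a,1)` on which `v < 0`, `v` vanishing at `a`, `g' > 0` inside,
with `G(1) = 0`. -/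
lemma neg_to_one_G1 (hr : 0 ≤ r ∧ r < 1) {a : ℝ} (ha : 0 ≤ a) (ha1 : a < 1)
    (hva : vt cfg a = 0) (hv : ∀ t ∈ Ioo a 1, vv cfg t < 0)
    (hw : ∀ t ∈ Ioo a 1, 0 < ww cfg t) (hG1 : GG cfg 1 = 0) : False := by
  set s := (a + 1) / 2 with hs
  have hsab : s ∈ Ioo a 1 := ⟨by linarith, by linarith⟩
  have hs01 : s ∈ Ioo (0:ℝ) 1 := ⟨lt_of_le_of_lt ha hsab.1, hsab.2⟩
  obtain ⟨ξ₁, hξ₁, hξ₁eq⟩ := mvt_vt cfg ha hsab.1 hs01.2.le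
  rw [hva, vt_eq cfg s hs01, sub_zero] at hξ₁eq
  have h1 : GG cfg ξ₁ < 0 := by
    rw [hξ₁eq]
    exact div_neg_of_neg_of_pos (hv s hsab) (by linarith [hξ₁.1, hξ₁.2])
  have hξ₁m : ξ₁ ∈ Ioo a 1 := ⟨hξ₁.1, lt_trans hξ₁.2 hsab.2⟩
  -- G(1) is the limit of G from the left, and G < G ξ₁ < 0 after ξ₁
  have hlim : Tendsto (GG cfg) (𝓝[<] (1:ℝ)) (𝓝 (GG cfg 1)) := by
    have h := (GG_contOn cfg 1 ⟨zero_le_one, le_refl _⟩)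
    have h2 : Tendsto (GG cfg) (𝓝[Ioo (0:ℝ) 1] 1) (𝓝 (GG cfg 1)) :=
      h.mono_left (nhdsWithin_mono _ Ioo_subset_Icc_self)
    rwa [nhdsWithin_Ioo_eq_nhdsLT one_pos] at h2
  have hev : ∀ᶠ u in 𝓝[<] (1:ℝ), GG cfg u ≤ GG cfg ξ₁ := by
    filter_upwards [self_mem_nhdsWithin,
      mem_nhdsWithin_of_mem_nhds (Ioi_mem_nhds hξ₁m.2)] with u hu1 huξ
    exact (GG_anti cfg hr ha (le_refl 1) hv hw hξ₁m ⟨lt_trans hξ₁m.1 huξ, hu1⟩ huξ).le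
  have : GG cfg 1 ≤ GG cfg ξ₁ := le_of_tendsto hlim hev
  rw [hG1] at this
  linarith

/-- `v < 0` on all of `(0,1)` together with `G(0) = 0 = G(1)` is impossible. -/
lemma allneg_G0_G1 (hr : 0 ≤ r ∧ r < 1) (hv : ∀ t ∈ Ioo (0:ℝ) 1, vv cfg t < 0)
    (hG0 : GG cfg 0 = 0) (hG1 : GG cfg 1 = 0) : False := by
  have h0 : (0:ℝ) ∈ Icc (0:ℝ) 1 := ⟨le_refl _, zero_le_one⟩
  have h1 : (1:ℝ) ∈ Icc (0:ℝ) 1 := ⟨zero_le_one, le_refl _⟩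
  have hq10 : 0 < cfg.q₁ 0 := cfg.q₁_pos 0 h0
  have hq11 : 0 < cfg.q₁ 1 := cfg.q₁_pos 1 h1
  have hqlt : cfg.q₁ 1 < cfg.q₁ 0 :=
    q₁_anti cfg (le_refl 0) (le_refl 1) hv h0 h1 one_pos
  have hq20 : 0 < cfg.q₂ 0 := cfg.q₂_pos 0 ⟨le_refl _, one_pos⟩
  have hg0 : 0 < gg cfg 0 := gg_pos cfg 0 h0
  have hg0lt : gg cfg 0 < cfg.q₁ 0 := by
    show cfg.q₁ 0 - cfg.q₂ 0 < cfg.q₁ 0; linarith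
  have hr1 : 0 < 1 - r := by linarith [hr.2]
  have hr2 : 0 < 1 + r := by linarith [hr.1]
  -- from G(0) = 0 : Cc < (1+r)/q₁(0)²
  have e0 : -2 / (cfg.q₁ 0) ^ 2 + Cc cfg + (1 - r) / (gg cfg 0) ^ 2 = 0 := hG0
  have hgq : (1 - r) / (cfg.q₁ 0) ^ 2 < (1 - r) / (gg cfg 0) ^ 2 := by
    apply div_lt_div_of_pos_left hr1 (by positivity)
    exact pow_lt_pow_left₀ hg0lt hg0.le (by norm_num)
  have hClt : Cc cfg < (1 + r) / (cfg.q₁ 0) ^ 2 := by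
    have : Cc cfg = 2 / (cfg.q₁ 0) ^ 2 - (1 - r) / (gg cfg 0) ^ 2 := by
      rw [neg_div] at e0; linarith
    rw [this]
    have h2 : (2:ℝ) / (cfg.q₁ 0) ^ 2 - (1 - r) / (cfg.q₁ 0) ^ 2 = (1 + r) / (cfg.q₁ 0) ^ 2 := by
      field_simp; ring
    linarith
  -- from G(1) = 0 : Cc = (1+r)/q₁(1)²
  have hg1 : gg cfg 1 = cfg.q₁ 1 := by show cfg.q₁ 1 - cfg.q₂ 1 = cfg.q₁ 1; rw [cfg.bc₄]; ring
  have e1 : -2 / (cfg.q₁ 1) ^ 2 + Cc cfg + (1 - r) / (gg cfg 1) ^ 2 = 0 := hG1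
  rw [hg1] at e1
  have hCeq : Cc cfg = (1 + r) / (cfg.q₁ 1) ^ 2 := by
    rw [neg_div] at e1
    have h2 : (2:ℝ) / (cfg.q₁ 1) ^ 2 - (1 - r) / (cfg.q₁ 1) ^ 2 = (1 + r) / (cfg.q₁ 1) ^ 2 := by
      field_simp; ring
    linarith
  have : (1 + r) / (cfg.q₁ 0) ^ 2 < (1 + r) / (cfg.q₁ 1) ^ 2 := by
    apply div_lt_div_of_pos_left hr2 (by positivity)
    exact pow_lt_pow_left₀ hqlt hq11.le (by norm_num)
  rw [hCeq] at hClt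
  linarith

end FPAux5

namespace FPAux6
open FPAux FPAux2 FPAux3 FPAux4 FPAux5

/-- Key algebraic inequality: `y ↦ 1/y² - 1/(y+Δ)²` is strictly decreasing on `(0,∞)`. -/
lemma key_ineq {a c Δ : ℝ} (ha : 0 < a) (hac : a < c) (hΔ : 0 < Δ) :
    1 / c ^ 2 - 1 / (c + Δ) ^ 2 < 1 / a ^ 2 - 1 / (a + Δ) ^ 2 := by
  have hc : 0 < c := lt_trans ha hac
  have haΔ : 0 < a + Δ := by linarith
  have hcΔ : 0 < c + Δ := by linarith
  have e1 : 1 / a ^ 2 - 1 / (a + Δ) ^ 2 = Δ * (2 * a + Δ) / (a * (a + Δ)) ^ 2 := by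
    field_simp; ring
  have e2 : 1 / c ^ 2 - 1 / (c + Δ) ^ 2 = Δ * (2 * c + Δ) / (c * (c + Δ)) ^ 2 := by
    field_simp; ring
  rw [e1, e2, div_lt_div_iff₀ (by positivity) (by positivity)]
  set X := a * (a + Δ) with hX
  set Y := c * (c + Δ) with hY
  have hXpos : 0 < X := by positivity
  have hXY : X < Y := by
    have : a * (a + Δ) < c * (c + Δ) := by nlinarith
    simpa [hX, hY] using this
  have hid : (2 * a + Δ) * Y ^ 2 - (2 * c + Δ) * X ^ 2 =
      (c - a) * ((2 * a + Δ) * (Y + X) * (a + c + Δ) - 2 * X ^ 2) := by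
    rw [hX, hY]; ring
  have hbig : 2 * X ^ 2 < (2 * a + Δ) * (Y + X) * (a + c + Δ) := by
    have h1 : a * (2 * X) * (a + Δ) ≤ (2 * a + Δ) * (Y + X) * (a + Δ) := by
      have hax : a * (2 * X) ≤ (2 * a + Δ) * (Y + X) := by nlinarith
      exact mul_le_mul_of_nonneg_right hax haΔ.le
    have h2 : (2 * a + Δ) * (Y + X) * (a + Δ) < (2 * a + Δ) * (Y + X) * (a + c + Δ) := by
      have hp : 0 < (2 * a + Δ) * (Y + X) := by positivity
      have : a + Δ < a + c + Δ := by linarith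
      exact (mul_lt_mul_iff_right₀ hp).2 this
    have h3 : a * (2 * X) * (a + Δ) = 2 * X ^ 2 := by rw [hX]; ring
    linarith
  nlinarith [mul_pos (sub_pos.2 hac) (sub_pos.2 hbig), hΔ]

end FPAux6

namespace FPAux7
open FPAux FPAux2 FPAux3 FPAux4 FPAux5 FPAux6

variable {r : ℝ} (cfg : FrozenPlanetConfig r)

/-- The main "bounce" contradiction: if `v < 0` on `(0,b)` with `g'` vanishing at
`γ ∈ (0,b)`, `v → 0` at `b⁻`, `G(b) ≥ 0` and `G(0) = 0`, we get a contradiction. -/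
lemma enemy (hr : 0 ≤ r ∧ r < 1) {γ b : ℝ} (hγ0 : 0 < γ) (hγb : γ < b) (hb1 : b ≤ 1)
    (hwγ : ww cfg γ = 0)
    (hv : ∀ t ∈ Ioo (0:ℝ) b, vv cfg t < 0)
    (hvblim : Tendsto (vv cfg) (𝓝[<] b) (𝓝 0))
    (hGb : 0 ≤ GG cfg b)
    (hG0 : GG cfg 0 = 0) : False := by
  classical
  have hγ1 : γ < 1 := lt_of_lt_of_le hγb hb1
  have hγm : γ ∈ Ioo (0:ℝ) 1 := ⟨hγ0, hγ1⟩
  have hr1 : 0 < 1 - r := by linarith [hr.2]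
  have hb0 : 0 < b := lt_trans hγ0 hγb
  -- sign of w on both sides of γ
  have hwneg : ∀ t ∈ Ioo (0:ℝ) γ, ww cfg t < 0 := by
    intro t ht
    have := ww_strictMono cfg hr ⟨ht.1, lt_trans ht.2 hγ1⟩ hγm ht.2
    rwa [hwγ] at this
  have hwpos : ∀ t ∈ Ioo γ b, 0 < ww cfg t := by
    intro t ht
    have ht1 : t ∈ Ioo (0:ℝ) 1 := ⟨lt_trans hγ0 ht.1, lt_of_lt_of_le ht.2 hb1⟩
    have := ww_strictMono cfg hr hγm ht1 ht.1
    rwa [hwγ] at this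
  -- monotonicity of g and q₁, q₂
  have hganti : StrictAntiOn (gg cfg) (Icc 0 γ) := gg_anti cfg hr (le_refl 0) hγ1.le hwneg
  have hgmono : StrictMonoOn (gg cfg) (Icc γ b) := gg_mono cfg hr hγ0.le hb1 hwpos
  have hganti_le : ∀ u ∈ Icc (0:ℝ) γ, ∀ w ∈ Icc (0:ℝ) γ, u ≤ w → gg cfg w ≤ gg cfg u := by
    intro u hu w hw huw
    rcases eq_or_lt_of_le huw with rfl | h
    · exact le_refl _
    · exact (hganti hu hw h).le
  have hq1anti : StrictAntiOn cfg.q₁ (Icc 0 b) := q₁_anti cfg (le_refl 0) hb1 hv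
  have hq2anti : StrictAntiOn cfg.q₂ (Icc 0 1) := q₂_anti cfg hr (le_refl 0) (le_refl 1)
  have h0b : (0:ℝ) ∈ Icc (0:ℝ) b := ⟨le_refl _, hb0.le⟩
  have hbb : b ∈ Icc (0:ℝ) b := ⟨hb0.le, le_refl _⟩
  have h0I : (0:ℝ) ∈ Icc (0:ℝ) 1 := ⟨le_refl _, zero_le_one⟩
  have hbI : b ∈ Icc (0:ℝ) 1 := ⟨hb0.le, hb1⟩
  have hq10 : 0 < cfg.q₁ 0 := cfg.q₁_pos 0 h0I
  have hq1b : 0 < cfg.q₁ b := cfg.q₁_pos b hbI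
  have hg0 : 0 < gg cfg 0 := gg_pos cfg 0 h0I
  have hgb : 0 < gg cfg b := gg_pos cfg b hbI
  -- the level at b is below the initial level : gg b < gg 0
  have hgb_lt : gg cfg b < gg cfg 0 := by
    have hq1lt : cfg.q₁ b < cfg.q₁ 0 := hq1anti h0b hbb hb0
    have hN : 2 / (cfg.q₁ 0) ^ 2 < 2 / (cfg.q₁ b) ^ 2 := by
      apply div_lt_div_of_pos_left (by norm_num) (by positivity)
      exact pow_lt_pow_left₀ hq1lt hq1b.le (by norm_num)
    have e0 : -2 / (cfg.q₁ 0) ^ 2 + Cc cfg + (1 - r) / (gg cfg 0) ^ 2 = 0 := hG0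
    have eb : 0 ≤ -2 / (cfg.q₁ b) ^ 2 + Cc cfg + (1 - r) / (gg cfg b) ^ 2 := hGb
    rw [neg_div] at e0 eb
    have hPP : (1 - r) / (gg cfg 0) ^ 2 < (1 - r) / (gg cfg b) ^ 2 := by linarith
    by_contra hle
    push_neg at hle
    have : (1 - r) / (gg cfg b) ^ 2 ≤ (1 - r) / (gg cfg 0) ^ 2 := by
      apply div_le_div_of_nonneg_left hr1.le (by positivity)
      exact pow_le_pow_left₀ hg0.le hle 2
    linarith
  -- construct the level-inverse ρ on (gg γ, gg 0)
  have hggcont : ContinuousOn (gg cfg) (Icc 0 γ) :=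
    (cfg.q₁_smooth.continuousOn.sub cfg.q₂_cont).mono (Icc_subset_Icc (le_refl 0) hγ1.le)
  have exρ : ∀ x : ℝ, ∃ s : ℝ, x ∈ Ioo (gg cfg γ) (gg cfg 0) →
      s ∈ Ioo (0:ℝ) γ ∧ gg cfg s = x := by
    intro x
    by_cases hx : x ∈ Ioo (gg cfg γ) (gg cfg 0)
    · have himg : x ∈ gg cfg '' (Icc 0 γ) :=
        intermediate_value_Icc' hγ0.le hggcont ⟨hx.1.le, hx.2.le⟩
      obtain ⟨s, hsmem, hgs⟩ := himg
      refine ⟨s, fun _ => ⟨⟨lt_of_le_of_ne hsmem.1 ?_, lt_of_le_of_ne hsmem.2 ?_⟩, hgs⟩⟩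
      · intro h0; rw [← h0] at hgs; rw [hgs] at hx; exact absurd hx.2 (lt_irrefl x)
      · intro hγeq; rw [hγeq] at hgs; rw [hgs] at hx; exact absurd hx.1 (lt_irrefl x)
    · exact ⟨0, fun h => absurd h hx⟩
  choose ρ hρ using exρ
  set ω : ℝ → ℝ := fun t => ρ (gg cfg t) with hω_def
  -- levels of points in (γ, b)
  have hlevel : ∀ t ∈ Ioo γ b, gg cfg t ∈ Ioo (gg cfg γ) (gg cfg 0) := by
    intro t ht
    constructor
    · exact hgmono ⟨le_refl γ, hγb.le⟩ ⟨ht.1.le, ht.2.le⟩ ht.1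
    · exact lt_trans (hgmono ⟨ht.1.le.trans (le_refl t), ht.2.le⟩ ⟨hγb.le, le_refl b⟩ ht.2) hgb_lt
  have hωmem : ∀ t ∈ Ioo γ b, ω t ∈ Ioo (0:ℝ) γ := fun t ht => (hρ _ (hlevel t ht)).1
  have hωval : ∀ t ∈ Ioo γ b, gg cfg (ω t) = gg cfg t := fun t ht => (hρ _ (hlevel t ht)).2
  -- continuity of ρ at interior levels
  have hρcont : ∀ x ∈ Ioo (gg cfg γ) (gg cfg 0), ContinuousAt ρ x := by
    intro x hx
    have hs₀ := (hρ x hx).1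
    have hval := (hρ x hx).2
    rw [ContinuousAt]
    apply tendsto_order.2
    constructor
    · intro c hc
      set c₂ : ℝ := max c (ρ x / 2) with hc₂
      have hc₂pos : 0 < c₂ := lt_of_lt_of_le (by linarith [hs₀.1]) (le_max_right _ _)
      have hc₂lt : c₂ < ρ x := max_lt hc (by linarith [hs₀.1])
      have hgc₂ : x < gg cfg c₂ := by
        rw [← hval]
        exact hganti ⟨hc₂pos.le, (lt_trans hc₂lt hs₀.2).le⟩ ⟨hs₀.1.le, hs₀.2.le⟩ hc₂lt
      filter_upwards [Iio_mem_nhds hgc₂, (isOpen_Ioo).mem_nhds hx] with y hy1 hy2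
      have hmem := (hρ y hy2).1
      have hvy := (hρ y hy2).2
      rcases lt_or_ge c₂ (ρ y) with h | h
      · exact lt_of_le_of_lt (le_max_left _ _) h
      · exfalso
        have hle : gg cfg c₂ ≤ gg cfg (ρ y) :=
          hganti_le _ ⟨hmem.1.le, hmem.2.le⟩ _ ⟨hc₂pos.le, (lt_trans hc₂lt hs₀.2).le⟩ h
        rw [hvy] at hle
        have hyy : y < gg cfg c₂ := mem_Iio.1 hy1
        linarith
    · intro c hc
      set c₂ : ℝ := min c ((ρ x + γ) / 2) with hc₂
      have hc₂gt : ρ x < c₂ := lt_min hc (by linarith [hs₀.2])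
      have hc₂lt : c₂ < γ := lt_of_le_of_lt (min_le_right _ _) (by linarith [hs₀.2])
      have hc₂pos : 0 < c₂ := lt_trans hs₀.1 hc₂gt
      have hgc₂ : gg cfg c₂ < x := by
        rw [← hval]
        exact hganti ⟨hs₀.1.le, hs₀.2.le⟩ ⟨hc₂pos.le, hc₂lt.le⟩ hc₂gt
      filter_upwards [Ioi_mem_nhds hgc₂, (isOpen_Ioo).mem_nhds hx] with y hy1 hy2
      have hmem := (hρ y hy2).1
      have hvy := (hρ y hy2).2
      rcases lt_or_ge (ρ y) c₂ with h | h
      · exact lt_of_lt_of_le h (min_le_left _ _)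
      · exfalso
        have hle : gg cfg (ρ y) ≤ gg cfg c₂ :=
          hganti_le _ ⟨hc₂pos.le, hc₂lt.le⟩ _ ⟨hmem.1.le, hmem.2.le⟩ h
        rw [hvy] at hle
        have hyy : gg cfg c₂ < y := mem_Ioi.1 hy1
        linarith
  -- derivative of ω
  have hωd : ∀ t ∈ Ioo γ b, HasDerivAt ω ((ww cfg (ω t))⁻¹ * ww cfg t) t := by
    intro t ht
    have ht1 : t ∈ Ioo (0:ℝ) 1 := ⟨lt_trans hγ0 ht.1, lt_of_lt_of_le ht.2 hb1⟩
    have hx := hlevel t ht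
    have hsmem : ρ (gg cfg t) ∈ Ioo (0:ℝ) γ := (hρ _ hx).1
    have hs1 : ρ (gg cfg t) ∈ Ioo (0:ℝ) 1 := ⟨hsmem.1, lt_trans hsmem.2 hγ1⟩
    have hwne : ww cfg (ρ (gg cfg t)) ≠ 0 := ne_of_lt (hwneg _ hsmem)
    have hρd : HasDerivAt ρ ((ww cfg (ρ (gg cfg t)))⁻¹) (gg cfg t) := by
      apply HasDerivAt.of_local_left_inverse (hρcont _ hx) (hasDerivAt_gg cfg _ hs1) hwne
      filter_upwards [(isOpen_Ioo).mem_nhds hx] with y hy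
      exact (hρ y hy).2
    exact hρd.comp t (hasDerivAt_gg cfg t ht1)
  -- limit of ω at γ⁺
  have hggγcont : ContinuousAt (gg cfg) γ :=
    (hasDerivAt_gg cfg γ hγm).differentiableAt.continuousAt
  have hωlim : Tendsto ω (𝓝[>] γ) (𝓝 γ) := by
    apply tendsto_order.2
    constructor
    · intro c hc
      set c₂ : ℝ := max c (γ / 2) with hc₂
      have hc₂pos : 0 < c₂ := lt_of_lt_of_le (by linarith) (le_max_right _ _)
      have hc₂lt : c₂ < γ := max_lt hc (by linarith)
      have hgc₂ : gg cfg γ < gg cfg c₂ :=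
        hganti ⟨hc₂pos.le, hc₂lt.le⟩ ⟨hγ0.le, le_refl γ⟩ hc₂lt
      have hev1 : ∀ᶠ t in 𝓝[>] γ, gg cfg t < gg cfg c₂ :=
        (hggγcont.tendsto.mono_left nhdsWithin_le_nhds) (Iio_mem_nhds hgc₂)
      filter_upwards [hev1, Ioo_mem_nhdsGT_of_mem ⟨le_refl γ, hγb⟩] with t hgt htm
      have hmem := hωmem t htm
      have hvy := hωval t htm
      rcases lt_or_ge c₂ (ω t) with h | h
      · exact lt_of_le_of_lt (le_max_left _ _) h
      · exfalso
        have hle : gg cfg c₂ ≤ gg cfg (ω t) :=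
          hganti_le _ ⟨hmem.1.le, hmem.2.le⟩ _ ⟨hc₂pos.le, hc₂lt.le⟩ h
        rw [hvy] at hle
        linarith
    · intro c hc
      filter_upwards [Ioo_mem_nhdsGT_of_mem ⟨le_refl γ, hγb⟩] with t htm
      exact lt_trans (hωmem t htm).2 hc
  -- Ψ : the ascending branch is faster than the descending branch at equal levels
  set Ψ : ℝ → ℝ := fun t => (ww cfg t) ^ 2 - (ww cfg (ω t)) ^ 2 with hΨ_def
  have hΨd : ∀ t ∈ Ioo γ b,
      HasDerivAt Ψ (2 * ww cfg t * (psi cfg t - psi cfg (ω t))) t := by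
    intro t ht
    have ht1 : t ∈ Ioo (0:ℝ) 1 := ⟨lt_trans hγ0 ht.1, lt_of_lt_of_le ht.2 hb1⟩
    have hsmem := hωmem t ht
    have hs1 : ω t ∈ Ioo (0:ℝ) 1 := ⟨hsmem.1, lt_trans hsmem.2 hγ1⟩
    have hwne : ww cfg (ω t) ≠ 0 := ne_of_lt (hwneg _ hsmem)
    have h1 : HasDerivAt (fun u => (ww cfg u) ^ 2) (2 * ww cfg t ^ 1 * psi cfg t) t :=
      (hasDerivAt_ww cfg t ht1).pow 2
    have h2 : HasDerivAt (fun u => ww cfg (ω u))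
        (psi cfg (ω t) * ((ww cfg (ω t))⁻¹ * ww cfg t)) t :=
      (hasDerivAt_ww cfg (ω t) hs1).comp t (hωd t ht)
    have h3 : HasDerivAt (fun u => (ww cfg (ω u)) ^ 2)
        (2 * (ww cfg (ω t)) ^ 1 * (psi cfg (ω t) * ((ww cfg (ω t))⁻¹ * ww cfg t))) t :=
      h2.pow 2
    have := h1.sub h3
    refine this.congr_deriv ?_
    have hinv : ww cfg (ω t) * (ww cfg (ω t))⁻¹ = 1 := mul_inv_cancel₀ hwne
    linear_combination (-2 * ww cfg t * psi cfg (ω t)) * hinv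
  have hψcmp : ∀ t ∈ Ioo γ b, psi cfg (ω t) < psi cfg t := by
    intro t ht
    have ht1 : t ∈ Ioo (0:ℝ) 1 := ⟨lt_trans hγ0 ht.1, lt_of_lt_of_le ht.2 hb1⟩
    have hsmem := hωmem t ht
    set s : ℝ := ω t with hs_def
    have hst : s < t := lt_trans hsmem.2 ht.1
    have hsI : s ∈ Icc (0:ℝ) 1 := ⟨hsmem.1.le, (lt_trans hsmem.2 hγ1).le⟩
    have htI : t ∈ Icc (0:ℝ) 1 := ⟨ht1.1.le, ht1.2.le⟩
    have hq2t : 0 < cfg.q₂ t := cfg.q₂_pos t ⟨ht1.1.le, ht1.2⟩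
    have hq2lt : cfg.q₂ t < cfg.q₂ s := hq2anti hsI htI hst
    have hq12 : cfg.q₂ t < cfg.q₁ t := cfg.q₂_lt_q₁ t htI
    set Δ : ℝ := cfg.q₂ s - cfg.q₂ t with hΔ_def
    have hΔpos : 0 < Δ := sub_pos.2 hq2lt
    have hgeq : cfg.q₁ s - cfg.q₂ s = cfg.q₁ t - cfg.q₂ t := hωval t ht
    have hq2s : cfg.q₂ s = cfg.q₂ t + Δ := by rw [hΔ_def]; ring
    have hq1s : cfg.q₁ s = cfg.q₁ t + Δ := by rw [hΔ_def]; linarith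
    have hkey := key_ineq hq2t hq12 hΔpos
    rw [← hq2s, ← hq1s] at hkey
    have e2 : ∀ x y : ℝ, 2 / x ^ 2 - 2 / y ^ 2 = 2 * (1 / x ^ 2 - 1 / y ^ 2) := by
      intro x y; ring
    show psi cfg s < psi cfg t
    have hps : psi cfg s = 2 / cfg.q₂ s ^ 2 - 2 / cfg.q₁ s ^ 2 + 2 * Cc cfg
        + 2 * (1 - r) / (cfg.q₁ s - cfg.q₂ s) ^ 2 := by
      simp only [psi, GG, RR]; ring
    have hpt : psi cfg t = 2 / cfg.q₂ t ^ 2 - 2 / cfg.q₁ t ^ 2 + 2 * Cc cfg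
        + 2 * (1 - r) / (cfg.q₁ t - cfg.q₂ t) ^ 2 := by
      simp only [psi, GG, RR]; ring
    rw [hps, hpt, hgeq]
    have h1 := e2 (cfg.q₁ t) (cfg.q₁ s)
    have h2 := e2 (cfg.q₂ t) (cfg.q₂ s)
    linarith [hkey]
  -- Ψ is strictly increasing on (γ,b) with limit 0 at γ⁺, hence positive
  have hΨmono : StrictMonoOn Ψ (Ioo γ b) := by
    apply strictMonoOn_of_deriv_pos (convex_Ioo γ b)
    · intro t ht
      exact ((hΨd t ht).differentiableAt.continuousAt).continuousWithinAt
    · intro t ht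
      rw [interior_Ioo] at ht
      rw [(hΨd t ht).deriv]
      have := hwpos t ht
      have := hψcmp t ht
      nlinarith
  have hwwγ : Tendsto (ww cfg) (𝓝[>] γ) (𝓝 0) := by
    have := ((hasDerivAt_ww cfg γ hγm).differentiableAt.continuousAt).tendsto
    rw [hwγ] at this
    exact this.mono_left nhdsWithin_le_nhds
  have hwwωγ : Tendsto (fun t => ww cfg (ω t)) (𝓝[>] γ) (𝓝 0) := by
    have hc := ((hasDerivAt_ww cfg γ hγm).differentiableAt.continuousAt).tendsto
    rw [hwγ] at hc
    exact hc.comp hωlim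
  have hΨlim : Tendsto Ψ (𝓝[>] γ) (𝓝 0) := by
    have := (hwwγ.pow 2).sub (hwwωγ.pow 2)
    simpa using this
  have hΨpos : ∀ t ∈ Ioo γ b, 0 < Ψ t := by
    intro t ht
    obtain ⟨s, hγs, hst⟩ := exists_between ht.1
    have hsm : s ∈ Ioo γ b := ⟨hγs, lt_trans hst ht.2⟩
    have hΨs : 0 ≤ Ψ s := by
      apply le_of_tendsto hΨlim
      filter_upwards [Ioo_mem_nhdsGT_of_mem ⟨le_refl γ, hγs⟩] with u hu
      exact (hΨmono ⟨hu.1, lt_trans hu.2 hsm.2⟩ hsm hu.2).le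
    exact lt_of_le_of_lt hΨs (hΨmono hsm ht hst)
  -- Φ := v + z∘ω is strictly decreasing on (γ,b) with limit 0 at γ⁺, hence negative
  set Φ : ℝ → ℝ := fun t => vv cfg t + zz cfg (ω t) with hΦ_def
  have hΦd : ∀ t ∈ Ioo γ b, HasDerivAt Φ
      (GG cfg t + (-(RR cfg (ω t))) * ((ww cfg (ω t))⁻¹ * ww cfg t)) t := by
    intro t ht
    have ht1 : t ∈ Ioo (0:ℝ) 1 := ⟨lt_trans hγ0 ht.1, lt_of_lt_of_le ht.2 hb1⟩
    have hsmem := hωmem t ht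
    have hs1 : ω t ∈ Ioo (0:ℝ) 1 := ⟨hsmem.1, lt_trans hsmem.2 hγ1⟩
    have h1 := hasDerivAt_vv cfg t ht1
    have h2 : HasDerivAt (fun u => zz cfg (ω u))
        ((-(RR cfg (ω t))) * ((ww cfg (ω t))⁻¹ * ww cfg t)) t :=
      (hasDerivAt_zz cfg (ω t) hs1).comp t (hωd t ht)
    exact h1.add h2
  have hΦd_neg : ∀ t ∈ Ioo γ b,
      GG cfg t + (-(RR cfg (ω t))) * ((ww cfg (ω t))⁻¹ * ww cfg t) < 0 := by
    intro t ht
    have ht1 : t ∈ Ioo (0:ℝ) 1 := ⟨lt_trans hγ0 ht.1, lt_of_lt_of_le ht.2 hb1⟩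
    have hsmem := hωmem t ht
    have hs1 : ω t ∈ Ioo (0:ℝ) 1 := ⟨hsmem.1, lt_trans hsmem.2 hγ1⟩
    have hA : 0 < -(RR cfg (ω t)) := by
      have := RR_neg cfg hr (ω t) (Ioo_subset_Ico_self hs1); linarith
    have hws : ww cfg (ω t) < 0 := hwneg _ hsmem
    have hwt : 0 < ww cfg t := hwpos t ht
    -- from Ψ > 0 : w t > -w (ω t)
    have hΨt : 0 < ww cfg t ^ 2 - ww cfg (ω t) ^ 2 := hΨpos t ht
    have hwgt : -(ww cfg (ω t)) < ww cfg t := by nlinarith [hΨt, hws, hwt]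
    have hκ : (ww cfg (ω t))⁻¹ * ww cfg t < -1 := by
      have hne : ww cfg (ω t) ≠ 0 := ne_of_lt hws
      have hinv : (ww cfg (ω t))⁻¹ < 0 := inv_lt_zero.2 hws
      have hfact : (ww cfg (ω t))⁻¹ * ww cfg t + 1 =
          (ww cfg (ω t))⁻¹ * (ww cfg t + ww cfg (ω t)) := by
        field_simp
      have hsum : 0 < ww cfg t + ww cfg (ω t) := by linarith
      nlinarith [mul_neg_of_neg_of_pos hinv hsum]
    have hAκ : (-(RR cfg (ω t))) * ((ww cfg (ω t))⁻¹ * ww cfg t) < -(-(RR cfg (ω t))) := by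
      have := mul_lt_mul_of_pos_left hκ hA
      simpa [mul_neg] using this
    have hGQ : GG cfg t + RR cfg (ω t) < 0 := by
      have hgeq : cfg.q₁ (ω t) - cfg.q₂ (ω t) = cfg.q₁ t - cfg.q₂ t := hωval t ht
      have hq2s : 0 < cfg.q₂ (ω t) := cfg.q₂_pos (ω t) (Ioo_subset_Ico_self hs1)
      have hq1t : 0 < cfg.q₁ t := cfg.q₁_pos t (Ioo_subset_Icc_self ht1)
      show (-2 / (cfg.q₁ t) ^ 2 + Cc cfg + (1 - r) / (cfg.q₁ t - cfg.q₂ t) ^ 2)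
          + (-2 / (cfg.q₂ (ω t)) ^ 2 - Cc cfg - (1 - r) / (cfg.q₁ (ω t) - cfg.q₂ (ω t)) ^ 2) < 0
      rw [hgeq]
      have hp1 : 0 < 2 / (cfg.q₁ t) ^ 2 := by positivity
      have hp2 : 0 < 2 / (cfg.q₂ (ω t)) ^ 2 := by positivity
      rw [neg_div, neg_div]
      linarith
    linarith
  have hΦanti : StrictAntiOn Φ (Ioo γ b) := by
    apply strictAntiOn_of_deriv_neg (convex_Ioo γ b)
    · intro t ht
      exact ((hΦd t ht).differentiableAt.continuousAt).continuousWithinAt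
    · intro t ht
      rw [interior_Ioo] at ht
      rw [(hΦd t ht).deriv]
      exact hΦd_neg t ht
  have hΦlim : Tendsto Φ (𝓝[>] γ) (𝓝 0) := by
    have hvγ : Tendsto (vv cfg) (𝓝[>] γ) (𝓝 (vv cfg γ)) :=
      ((hasDerivAt_vv cfg γ hγm).differentiableAt.continuousAt).tendsto.mono_left
        nhdsWithin_le_nhds
    have hzγ : Tendsto (fun t => zz cfg (ω t)) (𝓝[>] γ) (𝓝 (zz cfg γ)) :=
      ((hasDerivAt_zz cfg γ hγm).differentiableAt.continuousAt).tendsto.comp hωlim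
    have := hvγ.add hzγ
    have heq : vv cfg γ + zz cfg γ = 0 := by
      have : ww cfg γ = vv cfg γ + zz cfg γ := by simp [ww, vv, zz]; ring
      rw [← this, hwγ]
    rwa [heq] at this
  have hΦneg : ∀ t ∈ Ioo γ b, Φ t < 0 := by
    intro t ht
    obtain ⟨s, hγs, hst⟩ := exists_between ht.1
    have hsm : s ∈ Ioo γ b := ⟨hγs, lt_trans hst ht.2⟩
    have hΦs : Φ s ≤ 0 := by
      apply ge_of_tendsto hΦlim
      filter_upwards [Ioo_mem_nhdsGT_of_mem ⟨le_refl γ, hγs⟩] with u hu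
      exact (hΦanti ⟨hu.1, lt_trans hu.2 hsm.2⟩ hsm hu.2).le
    exact lt_of_lt_of_le (hΦanti hsm ht hst) hΦs
  -- endgame : v stays below Φ(s₀) < 0, contradicting v → 0 at b⁻
  set s₀ : ℝ := (γ + b) / 2 with hs₀_def
  have hs₀m : s₀ ∈ Ioo γ b := ⟨by linarith, by linarith⟩
  have hΦs₀ : Φ s₀ < 0 := hΦneg s₀ hs₀m
  have hev : ∀ᶠ u in 𝓝[<] b, vv cfg u ≤ Φ s₀ := by
    filter_upwards [Ioo_mem_nhdsLT_of_mem ⟨hs₀m.2, le_refl b⟩] with u hu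
    have hum : u ∈ Ioo γ b := ⟨lt_trans hs₀m.1 hu.1, hu.2⟩
    have hz : 0 < zz cfg (ω u) := by
      have hsmem := hωmem u hum
      exact zz_pos cfg hr (ω u) ⟨hsmem.1, lt_trans hsmem.2 hγ1⟩
    have hΦu : Φ u < Φ s₀ := hΦanti hs₀m hum hu.1
    have : vv cfg u = Φ u - zz cfg (ω u) := by simp [hΦ_def]
    linarith
  have : (0:ℝ) ≤ Φ s₀ := le_of_tendsto hvblim hev
  linarith

end FPAux7

namespace FPAux8
open FPAux FPAux2 FPAux3 FPAux4 FPAux5 FPAux6 FPAux7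

variable {r : ℝ} (cfg : FrozenPlanetConfig r)

/-- The limit of `w = g'` at `0⁺` is `vt 0`. -/
lemma ww_lim0 (hr : 0 ≤ r ∧ r < 1) : Tendsto (ww cfg) (𝓝[>] (0:ℝ)) (𝓝 (vt cfg 0)) := by
  have h1 := vt_lim0 cfg
  have h2 := zz_lim0 cfg hr
  have h := h1.add h2
  rw [add_zero] at h
  apply h.congr
  intro t
  simp [ww, vv, zz]
  ring

/-- If `v` extends to `0` at `t = 0` then `w = g' > 0` on `(0,1)`. -/
lemma ww_pos_of_v0 (hr : 0 ≤ r ∧ r < 1) (h0 : vt cfg 0 = 0) :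
    ∀ t ∈ Ioo (0:ℝ) 1, 0 < ww cfg t := by
  have hlim : Tendsto (ww cfg) (𝓝[>] (0:ℝ)) (𝓝 0) := by
    have := ww_lim0 cfg hr; rwa [h0] at this
  have wmono := ww_strictMono cfg hr
  have hnn : ∀ s ∈ Ioo (0:ℝ) 1, 0 ≤ ww cfg s := by
    intro s hs
    apply le_of_tendsto hlim
    filter_upwards [self_mem_nhdsWithin,
      mem_nhdsWithin_of_mem_nhds (Iio_mem_nhds hs.1)] with u hu hus
    exact (wmono ⟨hu, lt_trans hus hs.2⟩ hs hus).le
  intro t ht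
  obtain ⟨s, hs⟩ := exists_between ht.1
  have hsmem : s ∈ Ioo (0:ℝ) 1 := ⟨hs.1, lt_trans hs.2 ht.2⟩
  exact lt_of_le_of_lt (hnn s hsmem) (wmono hsmem ht hs.2)

/-- If `v` vanishes at `b` and is negative on a left-neighbourhood, then `G(b) ≥ 0`. -/
lemma GG_nonneg_left {b : ℝ} (hb : b ∈ Ioo (0:ℝ) 1) (hvb : vv cfg b = 0)
    (hneg : ∀ᶠ u in 𝓝[<] b, vv cfg u < 0) : 0 ≤ GG cfg b := by
  have h := hasDerivAt_iff_tendsto_slope.1 (hasDerivAt_vv cfg b hb)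
  have h' : Tendsto (slope (vv cfg) b) (𝓝[<] b) (𝓝 (GG cfg b)) :=
    h.mono_left (nhdsWithin_mono _ fun u hu => ne_of_lt hu)
  apply ge_of_tendsto h'
  filter_upwards [hneg, self_mem_nhdsWithin] with u hu hub
  have hden : u - b < 0 := sub_neg.2 hub
  have : slope (vv cfg) b u = (vv cfg u - vv cfg b) / (u - b) := by
    rw [slope_def_field]
  rw [this, hvb, sub_zero]
  exact (div_pos_of_neg_of_neg hu hden).le

end FPAux8

namespace FPMain
open FPAux FPAux2 FPAux3 FPAux4 FPAux5 FPAux6 FPAux7 FPAux8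

variable {r : ℝ} (cfg : FrozenPlanetConfig r)

lemma main_pos (hr : 0 ≤ r ∧ r < 1) : ∀ t ∈ Ioo (0:ℝ) 1, 0 < vv cfg t := by
  by_contra hcon
  push_neg at hcon
  obtain ⟨t₀, ht₀, ht₀le⟩ := hcon
  by_cases hex : ∃ t' ∈ Ioo (0:ℝ) 1, vv cfg t' < 0
  swap
  · push_neg at hex
    exact no_interior_touch cfg hr ht₀ (le_antisymm ht₀le (hex t₀ ht₀)) hex
  obtain ⟨t', ht', hvt'⟩ := hex
  have hvt'vt : vt cfg t' < 0 := by rw [vt_eq cfg t' ht']; exact hvt'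
  -- the right and left "touch" sets
  set A : Set ℝ := Icc t' 1 ∩ (vt cfg) ⁻¹' (Ici 0) with hA_def
  set B : Set ℝ := Icc 0 t' ∩ (vt cfg) ⁻¹' (Ici 0) with hB_def
  have hAclosed : IsClosed A :=
    (vt_cont cfg |>.mono (Icc_subset_Icc ht'.1.le (le_refl 1))).preimage_isClosed_of_isClosed
      isClosed_Icc isClosed_Ici
  have hBclosed : IsClosed B :=
    (vt_cont cfg |>.mono (Icc_subset_Icc (le_refl 0) ht'.2.le)).preimage_isClosed_of_isClosed
      isClosed_Icc isClosed_Ici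
  -- ===== analysis of the right set =====
  have hrightA : A.Nonempty →
      ∃ β, t' < β ∧ β ≤ 1 ∧ vt cfg β = 0 ∧ (∀ t ∈ Ico t' β, vt cfg t < 0) := by
    intro hA
    have hbdd : BddBelow A := ⟨t', fun x hx => hx.1.1⟩
    set β := sInf A with hβ_def
    have hβA : β ∈ A := hAclosed.csInf_mem hA hbdd
    have hβlb : t' ≤ β := hβA.1.1
    have hβne : t' ≠ β := by
      intro h; rw [← h] at hβA; exact absurd (mem_Ici.1 hβA.2) (not_le.2 hvt'vt)
    have hβgt : t' < β := lt_of_le_of_ne hβlb hβne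
    have hβle : β ≤ 1 := hβA.1.2
    have hneg : ∀ t ∈ Ico t' β, vt cfg t < 0 := by
      intro t ht
      by_contra hge
      push_neg at hge
      have : t ∈ A := ⟨⟨ht.1, le_trans ht.2.le hβle⟩, mem_Ici.2 hge⟩
      exact absurd (csInf_le hbdd this) (not_le.2 ht.2)
    refine ⟨β, hβgt, hβle, ?_, hneg⟩
    have h1 : 0 ≤ vt cfg β := mem_Ici.1 hβA.2
    have h2 : vt cfg β ≤ 0 := by
      have hc : Tendsto (vt cfg) (𝓝[Ioo t' β] β) (𝓝 (vt cfg β)) :=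
        (vt_cont cfg β ⟨le_trans ht'.1.le hβlb, hβle⟩).mono_left
          (nhdsWithin_mono _ (fun u hu => ⟨lt_trans ht'.1 hu.1 |>.le, (lt_of_lt_of_le hu.2 hβle).le⟩))
      rw [nhdsWithin_Ioo_eq_nhdsLT hβgt] at hc
      apply le_of_tendsto hc
      filter_upwards [Ioo_mem_nhdsLT_of_mem (⟨hβgt, le_refl β⟩ : β ∈ Ioc t' β)] with u hu
      exact (hneg u ⟨hu.1.le, hu.2⟩).le
    linarith
  -- ===== analysis of the left set =====
  have hleftB : B.Nonempty →
      ∃ α, 0 ≤ α ∧ α < t' ∧ vt cfg α = 0 ∧ (∀ t ∈ Ioc α t', vt cfg t < 0) ∧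
        (∀ t ∈ Ioo α 1, 0 < ww cfg t) := by
    intro hB
    have hbdd : BddAbove B := ⟨t', fun x hx => hx.1.2⟩
    set α := sSup B with hα_def
    have hαB : α ∈ B := hBclosed.csSup_mem hB hbdd
    have hαub : α ≤ t' := hαB.1.2
    have hα0 : 0 ≤ α := hαB.1.1
    have hαne : α ≠ t' := by
      intro h; rw [h] at hαB; exact absurd (mem_Ici.1 hαB.2) (not_le.2 hvt'vt)
    have hαlt : α < t' := lt_of_le_of_ne hαub hαne
    have hneg : ∀ t ∈ Ioc α t', vt cfg t < 0 := by
      intro t ht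
      by_contra hge
      push_neg at hge
      have : t ∈ B := ⟨⟨le_trans hα0 ht.1.le, ht.2⟩, mem_Ici.2 hge⟩
      exact absurd (le_csSup hbdd this) (not_le.2 ht.1)
    have hα_eq : vt cfg α = 0 := by
      have h1 : 0 ≤ vt cfg α := mem_Ici.1 hαB.2
      have h2 : vt cfg α ≤ 0 := by
        have hc : Tendsto (vt cfg) (𝓝[Ioo α t'] α) (𝓝 (vt cfg α)) :=
          (vt_cont cfg α ⟨hα0, le_trans hαub ht'.2.le⟩).mono_left
            (nhdsWithin_mono _ (fun u hu =>
              ⟨le_trans hα0 hu.1.le, (lt_trans hu.2 ht'.2).le⟩))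
        rw [nhdsWithin_Ioo_eq_nhdsGT hαlt] at hc
        apply le_of_tendsto hc
        filter_upwards [Ioo_mem_nhdsGT_of_mem (⟨le_refl α, hαlt⟩ : α ∈ Ico α t')] with u hu
        exact (hneg u ⟨hu.1, hu.2.le⟩).le
      linarith
    refine ⟨α, hα0, hαlt, hα_eq, hneg, ?_⟩
    rcases eq_or_lt_of_le hα0 with h0 | hpos
    · have := ww_pos_of_v0 cfg hr (by rw [← h0] at hα_eq; exact hα_eq)
      intro t ht
      exact this t ⟨lt_of_le_of_lt hα0 ht.1, ht.2⟩
    · have hαm : α ∈ Ioo (0:ℝ) 1 := ⟨hpos, lt_trans hαlt ht'.2⟩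
      have hwα : 0 < ww cfg α := by
        have hz := zz_pos cfg hr α hαm
        have hvα : vv cfg α = 0 := by rw [← vt_eq cfg α hαm]; exact hα_eq
        have : ww cfg α = vv cfg α + zz cfg α := by simp [ww, vv, zz]; ring
        rw [this, hvα, zero_add]; exact hz
      intro t ht
      have htm : t ∈ Ioo (0:ℝ) 1 := ⟨lt_trans hαm.1 ht.1, ht.2⟩
      exact lt_trans hwα (ww_strictMono cfg hr hαm htm ht.1)
  -- ===== case split =====
  by_cases hA : A.Nonempty <;> by_cases hB : B.Nonempty
  · -- both sides have zeros : two-zero contradiction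
    obtain ⟨β, hβgt, hβle, hβ0, hβneg⟩ := hrightA hA
    obtain ⟨α, hα0, hαlt, hα_eq, hαneg, hww⟩ := hleftB hB
    have hαβ : α < β := lt_trans hαlt hβgt
    apply neg_interval_two_zeros cfg hr hα0 hαβ hβle hα_eq hβ0
    · intro t ht
      have htm : t ∈ Ioo (0:ℝ) 1 := ⟨lt_of_le_of_lt hα0 ht.1, lt_of_lt_of_le ht.2 hβle⟩
      rw [← vt_eq cfg t htm]
      rcases le_or_gt t t' with h | h
      · exact hαneg t ⟨ht.1, h⟩
      · exact hβneg t ⟨h.le, ht.2⟩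
    · intro t ht
      exact hww t ⟨ht.1, lt_of_lt_of_le ht.2 hβle⟩
  · -- right zero, no left zero : the "enemy" bounce case
    obtain ⟨β, hβgt, hβle, hβ0, hβneg⟩ := hrightA hA
    have hvt0neg : vt cfg 0 < 0 := by
      by_contra hge
      push_neg at hge
      exact hB ⟨0, ⟨⟨le_refl 0, ht'.1.le⟩, mem_Ici.2 hge⟩⟩
    have hG0 : GG cfg 0 = 0 := by
      by_contra hGG
      rw [left_dichotomy cfg hGG] at hvt0neg
      exact absurd hvt0neg (lt_irrefl 0)
    have hβpos : 0 < β := lt_trans ht'.1 hβgt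
    -- v < 0 on (0, β)
    have hvneg : ∀ t ∈ Ioo (0:ℝ) β, vv cfg t < 0 := by
      intro t ht
      have htm : t ∈ Ioo (0:ℝ) 1 := ⟨ht.1, lt_of_lt_of_le ht.2 hβle⟩
      rw [← vt_eq cfg t htm]
      rcases le_or_gt t t' with h | h
      · by_contra hge
        push_neg at hge
        exact hB ⟨t, ⟨⟨ht.1.le, h⟩, mem_Ici.2 hge⟩⟩
      · exact hβneg t ⟨h.le, ht.2⟩
    -- w is negative near 0⁺
    have hwlim : Tendsto (ww cfg) (𝓝[>] (0:ℝ)) (𝓝 (vt cfg 0)) := ww_lim0 cfg hr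
    have hwev : ∀ᶠ u in 𝓝[>] (0:ℝ), ww cfg u < 0 ∧ u ∈ Ioo (0:ℝ) β := by
      have h1 : ∀ᶠ u in 𝓝[>] (0:ℝ), ww cfg u < 0 := hwlim (Iio_mem_nhds hvt0neg)
      filter_upwards [h1, self_mem_nhdsWithin,
        mem_nhdsWithin_of_mem_nhds (Iio_mem_nhds hβpos)] with u hu h2 h3
      exact ⟨hu, ⟨h2, h3⟩⟩
    obtain ⟨s₀, hs₀w, hs₀m⟩ := hwev.exists
    rcases lt_or_eq_of_le hβle with hβ1 | hβ1
    · -- β < 1 : γ exists by IVT between s₀ and β, then apply `enemy`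
      have hβm : β ∈ Ioo (0:ℝ) 1 := ⟨hβpos, hβ1⟩
      have hvvβ : vv cfg β = 0 := by rw [← vt_eq cfg β hβm]; exact hβ0
      have hwβ : 0 < ww cfg β := by
        have hz := zz_pos cfg hr β hβm
        have : ww cfg β = vv cfg β + zz cfg β := by simp [ww, vv, zz]; ring
        rw [this, hvvβ, zero_add]; exact hz
      have hIcc : Icc s₀ β ⊆ Ioo (0:ℝ) 1 := fun u hu =>
        ⟨lt_of_lt_of_le hs₀m.1 hu.1, lt_of_le_of_lt hu.2 hβ1⟩
      have himg : (0:ℝ) ∈ ww cfg '' (Icc s₀ β) :=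
        intermediate_value_Icc hs₀m.2.le (cont_ww cfg |>.mono hIcc) ⟨hs₀w.le, hwβ.le⟩
      obtain ⟨γ, hγmem, hγ0⟩ := himg
      have hγpos : 0 < γ := lt_of_lt_of_le hs₀m.1 hγmem.1
      have hγβ : γ < β := by
        rcases lt_or_eq_of_le hγmem.2 with h | h
        · exact h
        · rw [h] at hγ0; rw [hγ0] at hwβ; exact absurd hwβ (lt_irrefl 0)
      have hvblim : Tendsto (vv cfg) (𝓝[<] β) (𝓝 0) := by
        have := ((hasDerivAt_vv cfg β hβm).differentiableAt.continuousAt).tendsto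
        rw [hvvβ] at this
        exact this.mono_left nhdsWithin_le_nhds
      have hGb : 0 ≤ GG cfg β := by
        apply GG_nonneg_left cfg hβm hvvβ
        filter_upwards [Ioo_mem_nhdsLT_of_mem (⟨hβgt, le_refl β⟩ : β ∈ Ioc t' β)] with u hu
        exact hvneg u ⟨lt_trans ht'.1 hu.1, hu.2⟩
      exact enemy cfg hr hγpos hγβ hβ1.le hγ0 hvneg hvblim hGb hG0
    · -- β = 1
      subst hβ1
      have hvneg1 : ∀ t ∈ Ioo (0:ℝ) 1, vv cfg t < 0 := hvneg
      have hvt1 : vt cfg 1 = 0 := hβ0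
      have hvblim : Tendsto (vv cfg) (𝓝[<] (1:ℝ)) (𝓝 0) := by
        have := vt_lim1 cfg; rwa [hvt1] at this
      -- there is a point where w ≥ 0
      have hsh : ∃ s ∈ Ioo (0:ℝ) 1, 0 ≤ ww cfg s := by
        by_contra hnone
        push_neg at hnone
        set s : ℝ := (1:ℝ) / 2 with hs_def
        have hsm : s ∈ Ioo (0:ℝ) 1 := by constructor <;> norm_num
        have hzs : 0 < zz cfg s := zz_pos cfg hr s hsm
        have hev : ∀ᶠ u in 𝓝[<] (1:ℝ), vv cfg u ≤ -zz cfg s := by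
          filter_upwards [Ioo_mem_nhdsLT_of_mem (⟨hsm.2, le_refl 1⟩ : (1:ℝ) ∈ Ioc s 1)]
            with u hu
          have hum : u ∈ Ioo (0:ℝ) 1 := ⟨lt_trans hsm.1 hu.1, hu.2⟩
          have hwu : ww cfg u < 0 := hnone u hum
          have hzu : zz cfg s < zz cfg u := zz_strictMono cfg hr hsm hum hu.1
          have : vv cfg u = ww cfg u - zz cfg u := by simp [ww, vv, zz]
          rw [this]; linarith
        have := le_of_tendsto hvblim hev
        linarith
      obtain ⟨sh, hshm, hshw⟩ := hsh
      -- a point near 0 where w < 0, below sh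
      have hwev2 : ∀ᶠ u in 𝓝[>] (0:ℝ), ww cfg u < 0 ∧ u ∈ Ioo (0:ℝ) sh := by
        have h1 : ∀ᶠ u in 𝓝[>] (0:ℝ), ww cfg u < 0 := hwlim (Iio_mem_nhds hvt0neg)
        filter_upwards [h1, self_mem_nhdsWithin,
          mem_nhdsWithin_of_mem_nhds (Iio_mem_nhds hshm.1)] with u hu h2 h3
        exact ⟨hu, ⟨h2, h3⟩⟩
      obtain ⟨s₁, hs₁w, hs₁m⟩ := hwev2.exists
      have hIcc : Icc s₁ sh ⊆ Ioo (0:ℝ) 1 := fun u hu =>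
        ⟨lt_of_lt_of_le hs₁m.1 hu.1, lt_of_le_of_lt hu.2 hshm.2⟩
      have himg : (0:ℝ) ∈ ww cfg '' (Icc s₁ sh) :=
        intermediate_value_Icc hs₁m.2.le (cont_ww cfg |>.mono hIcc) ⟨hs₁w.le, hshw⟩
      obtain ⟨γ, hγmem, hγ0⟩ := himg
      have hγpos : 0 < γ := lt_of_lt_of_le hs₁m.1 hγmem.1
      have hγlt1 : γ < 1 := lt_of_le_of_lt hγmem.2 hshm.2
      -- G(1) ≥ 0
      have hGb : 0 ≤ GG cfg 1 := by
        by_contra hGneg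
        push_neg at hGneg
        have hlim : Tendsto (GG cfg) (𝓝[<] (1:ℝ)) (𝓝 (GG cfg 1)) := by
          have h := (GG_contOn cfg 1 ⟨zero_le_one, le_refl _⟩)
          have h2 : Tendsto (GG cfg) (𝓝[Ioo (0:ℝ) 1] 1) (𝓝 (GG cfg 1)) :=
            h.mono_left (nhdsWithin_mono _ Ioo_subset_Icc_self)
          rwa [nhdsWithin_Ioo_eq_nhdsLT one_pos] at h2
        have hevG : ∀ᶠ u in 𝓝[<] (1:ℝ), GG cfg u < 0 ∧ t' < u := by
          filter_upwards [hlim (Iio_mem_nhds hGneg),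
            mem_nhdsWithin_of_mem_nhds (Ioi_mem_nhds ht'.2)] with u h1 h2
          exact ⟨h1, h2⟩
        obtain ⟨c, hc, hsub⟩ := mem_nhdsLT_iff_exists_Ioo_subset.1 hevG
        set s : ℝ := (max c t' + 1) / 2 with hs_def
        have hcs : max c t' < 1 := max_lt hc ht'.2
        have hsgt : max c t' < s := by rw [hs_def]; linarith
        have hs1 : s < 1 := by rw [hs_def]; linarith
        have hs0 : 0 < s := lt_of_le_of_lt ht'.1.le (lt_of_le_of_lt (le_max_right c t') hsgt)
        obtain ⟨ξ, hξ, hξeq⟩ := mvt_vt cfg hs0.le hs1 (le_refl 1)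
        have hvts : vt cfg s < 0 :=
          hβneg s ⟨(lt_of_le_of_lt (le_max_right c t') hsgt).le, hs1⟩
        have hGξpos : 0 < GG cfg ξ := by
          rw [hξeq, hvt1]
          exact div_pos (by linarith) (by linarith [hξ.1, hξ.2])
        have hξmem : ξ ∈ Ioo c 1 :=
          ⟨lt_trans (lt_of_le_of_lt (le_max_left c t') hsgt) hξ.1, hξ.2⟩
        exact absurd hGξpos (not_lt.2 (hsub hξmem).1.le)
      exact enemy cfg hr hγpos hγlt1 (le_refl 1) hγ0 hvneg1 hvblim hGb hG0
  · -- no right zero, left zero : G(1) = 0 and the w-positive MVT contradiction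
    obtain ⟨α, hα0, hαlt, hα_eq, hαneg, hww⟩ := hleftB hB
    have hvt1neg : vt cfg 1 < 0 := by
      by_contra hge
      push_neg at hge
      exact hA ⟨1, ⟨⟨ht'.2.le, le_refl 1⟩, mem_Ici.2 hge⟩⟩
    have hG1 : GG cfg 1 = 0 := by
      by_contra hGG
      rw [right_dichotomy cfg hGG] at hvt1neg
      exact absurd hvt1neg (lt_irrefl 0)
    apply neg_to_one_G1 cfg hr hα0 (lt_trans hαlt ht'.2) hα_eq _ (fun t ht => hww t ht) hG1
    intro t ht
    have htm : t ∈ Ioo (0:ℝ) 1 := ⟨lt_of_le_of_lt hα0 ht.1, ht.2⟩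
    rw [← vt_eq cfg t htm]
    rcases le_or_gt t t' with h | h
    · exact hαneg t ⟨ht.1, h⟩
    · by_contra hge
      push_neg at hge
      exact hA ⟨t, ⟨⟨h.le, ht.2.le⟩, mem_Ici.2 hge⟩⟩
  · -- neither : v < 0 on all of (0,1) with G(0) = 0 = G(1)
    have hvt0neg : vt cfg 0 < 0 := by
      by_contra hge; push_neg at hge
      exact hB ⟨0, ⟨⟨le_refl 0, ht'.1.le⟩, mem_Ici.2 hge⟩⟩
    have hvt1neg : vt cfg 1 < 0 := by
      by_contra hge; push_neg at hge
      exact hA ⟨1, ⟨⟨ht'.2.le, le_refl 1⟩, mem_Ici.2 hge⟩⟩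
    have hG0 : GG cfg 0 = 0 := by
      by_contra hGG
      rw [left_dichotomy cfg hGG] at hvt0neg
      exact absurd hvt0neg (lt_irrefl 0)
    have hG1 : GG cfg 1 = 0 := by
      by_contra hGG
      rw [right_dichotomy cfg hGG] at hvt1neg
      exact absurd hvt1neg (lt_irrefl 0)
    apply allneg_G0_G1 cfg hr _ hG0 hG1
    intro t ht
    rw [← vt_eq cfg t ht]
    rcases le_or_gt t t' with h | h
    · by_contra hge; push_neg at hge
      exact hB ⟨t, ⟨⟨ht.1.le, h⟩, mem_Ici.2 hge⟩⟩
    · by_contra hge; push_neg at hge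
      exact hA ⟨t, ⟨⟨h.le, ht.2.le⟩, mem_Ici.2 hge⟩⟩

end FPMain

theorem q₁_strictly_increasing (r : ℝ) (hr : r ∈ Set.Ico (0:ℝ) 1)
    (cfg : FrozenPlanetConfig r) :
    (∀ t ∈ Set.Ioo (0:ℝ) 1, 0 < deriv cfg.q₁ t) ∧
    StrictMonoOn cfg.q₁ (Set.Icc 0 1) := by
  have hr' : 0 ≤ r ∧ r < 1 := ⟨hr.1, hr.2⟩
  have h1 := FPMain.main_pos cfg hr'
  refine ⟨fun t ht => h1 t ht, ?_⟩
  apply strictMonoOn_of_deriv_pos (convex_Icc 0 1) cfg.q₁_smooth.continuousOn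
  intro t ht
  rw [interior_Icc] at ht
  exact h1 t ht
end

section
/- Let (q₁, q₂) be a frozen planet configuration for parameter r = 1. Then q₁ is constant on [0,1]. -/
open Set
open Filter Topology

theorem q₁_constant_for_mean_interaction (cfg : FrozenPlanetConfig 1) :
    ∀ t ∈ Set.Icc (0:ℝ) 1, cfg.q₁ t = cfg.q₁ 0 := by
  set q : ℝ → ℝ := cfg.q₁ with hq
  set c : ℝ := 1 / (meanVal cfg.q₁ - meanVal cfg.q₂) ^ 2 with hc
  set P : ℝ → ℝ := fun t => -2 / (q t) ^ 2 + c with hP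
  set H : ℝ → ℝ := derivWithin q (Icc 0 1) with hH
  have huD : UniqueDiffOn ℝ (Icc (0:ℝ) 1) := uniqueDiffOn_Icc zero_lt_one
  have hqcont : ContinuousOn q (Icc 0 1) := cfg.q₁_smooth.continuousOn
  have hqpos : ∀ t ∈ Icc (0:ℝ) 1, 0 < q t := cfg.q₁_pos
  have ode : ∀ t ∈ Icc (0:ℝ) 1, deriv (deriv q) t = P t := by
    intro t ht
    have h := cfg.ode₁ t ht
    rw [h]; simp [hP, hc, hq]
  -- derivatives on the interior
  have hHeq : ∀ s ∈ Ioo (0:ℝ) 1, H s = deriv q s := fun s hs =>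
    derivWithin_of_mem_nhds (Icc_mem_nhds hs.1 hs.2)
  have key : ∀ t ∈ Ioo (0:ℝ) 1, HasDerivAt q (H t) t ∧ HasDerivAt H (P t) t := by
    intro t ht
    have hmem : Icc (0:ℝ) 1 ∈ 𝓝 t := Icc_mem_nhds ht.1 ht.2
    have hct : ContDiffAt ℝ (⊤ : ℕ∞) q t := cfg.q₁_smooth.contDiffAt hmem
    have hdq : DifferentiableAt ℝ q t := hct.differentiableAt (by simp)
    have hdq' : DifferentiableAt ℝ (deriv q) t := by
      have h2 : ContDiffAt ℝ (⊤ : ℕ∞) (fderiv ℝ q) t := hct.fderiv_right (by simp)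
      exact (h2.differentiableAt (by simp)).clm_apply (differentiableAt_const (1:ℝ))
    have hEq : H =ᶠ[𝓝 t] deriv q :=
      Filter.eventuallyEq_of_mem (Ioo_mem_nhds ht.1 ht.2) hHeq
    constructor
    · rw [hHeq t ht]; exact hdq.hasDerivAt
    · have h1 : HasDerivAt (deriv q) (P t) t := by
        have := hdq'.hasDerivAt
        rwa [ode t (Ioo_subset_Icc_self ht)] at this
      exact h1.congr_of_eventuallyEq hEq
  have hPder : ∀ t ∈ Ioo (0:ℝ) 1, HasDerivAt P (4 / (q t) ^ 3 * H t) t := by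
    intro t ht
    have hq0 : q t ≠ 0 := (hqpos t (Ioo_subset_Icc_self ht)).ne'
    have hq2 : (q t) ^ 2 ≠ 0 := pow_ne_zero 2 hq0
    have hpow : HasDerivAt (fun s => (q s) ^ 2) (2 * (q t) ^ 1 * H t) t := by
      exact ((key t ht).1.pow 2).congr_deriv (by norm_num)
    have hdiv : HasDerivAt (fun s => -2 / (q s) ^ 2)
        ((0 * (q t) ^ 2 - (-2) * (2 * (q t) ^ 1 * H t)) / ((q t) ^ 2) ^ 2) t :=
      (hasDerivAt_const t (-2 : ℝ)).div hpow hq2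
    have := hdiv.add_const c
    refine this.congr_deriv ?_
    field_simp
    ring
  -- the function F and its derivative
  set F : ℝ → ℝ := fun s => H s * P s with hF
  have hFder : ∀ t ∈ Ioo (0:ℝ) 1,
      HasDerivAt F (P t ^ 2 + 4 / (q t) ^ 3 * (H t) ^ 2) t := by
    intro t ht
    have := ((key t ht).2.mul (hPder t ht))
    exact this.congr_deriv (by ring)
  -- continuity
  have hHcont : ContinuousOn H (Icc 0 1) :=
    cfg.q₁_smooth.continuousOn_derivWithin huD (by simp)
  have hPcont : ContinuousOn P (Icc 0 1) := by
    apply ContinuousOn.add _ continuousOn_const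
    exact continuousOn_const.div (hqcont.pow 2)
      (fun t ht => pow_ne_zero 2 (hqpos t ht).ne')
  have hFcont : ContinuousOn F (Icc 0 1) := hHcont.mul hPcont
  -- ne bot filters
  have hne0 : (𝓝[Ioo (0:ℝ) 1] 0).NeBot := by
    apply mem_closure_iff_nhdsWithin_neBot.mp
    rw [closure_Ioo (by norm_num : (0:ℝ) ≠ 1)]
    exact ⟨le_refl 0, zero_le_one⟩
  have hne1 : (𝓝[Ioo (0:ℝ) 1] 1).NeBot := by
    apply mem_closure_iff_nhdsWithin_neBot.mp
    rw [closure_Ioo (by norm_num : (0:ℝ) ≠ 1)]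
    exact ⟨zero_le_one, le_refl 1⟩
  have hHtend0 : Tendsto H (𝓝[Ioo (0:ℝ) 1] 0) (𝓝 (H 0)) :=
    ((hHcont 0 ⟨le_refl 0, zero_le_one⟩).mono Ioo_subset_Icc_self)
  have hHtend1 : Tendsto H (𝓝[Ioo (0:ℝ) 1] 1) (𝓝 (H 1)) :=
    ((hHcont 1 ⟨zero_le_one, le_refl 1⟩).mono Ioo_subset_Icc_self)
  have hEq0 : H =ᶠ[𝓝[Ioo (0:ℝ) 1] 0] deriv q :=
    Filter.eventuallyEq_of_mem self_mem_nhdsWithin hHeq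
  have hEq1 : H =ᶠ[𝓝[Ioo (0:ℝ) 1] 1] deriv q :=
    Filter.eventuallyEq_of_mem self_mem_nhdsWithin hHeq
  -- boundary values of F
  have hF0 : F 0 = 0 := by
    by_cases hdiff : DifferentiableAt ℝ (deriv q) 0
    · have h2 : Tendsto (deriv q) (𝓝[Ioo (0:ℝ) 1] 0) (𝓝 (0:ℝ)) := by
        have h3 := hdiff.continuousAt.tendsto
        rw [cfg.bc₁] at h3
        exact h3.mono_left nhdsWithin_le_nhds
      have h1 : Tendsto (deriv q) (𝓝[Ioo (0:ℝ) 1] 0) (𝓝 (H 0)) :=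
        hHtend0.congr' hEq0
      have : H 0 = 0 := tendsto_nhds_unique h1 h2
      simp [hF, this]
    · have h1 : deriv (deriv q) 0 = 0 := deriv_zero_of_not_differentiableAt hdiff
      have h2 : P 0 = 0 := by rw [← ode 0 ⟨le_refl 0, zero_le_one⟩]; exact h1
      simp [hF, h2]
  have hF1 : F 1 = 0 := by
    by_cases hdiff : DifferentiableAt ℝ (deriv q) 1
    · have h2 : Tendsto (deriv q) (𝓝[Ioo (0:ℝ) 1] 1) (𝓝 (0:ℝ)) := by
        have h3 := hdiff.continuousAt.tendsto
        rw [cfg.bc₂] at h3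
        exact h3.mono_left nhdsWithin_le_nhds
      have h1 : Tendsto (deriv q) (𝓝[Ioo (0:ℝ) 1] 1) (𝓝 (H 1)) :=
        hHtend1.congr' hEq1
      have : H 1 = 0 := tendsto_nhds_unique h1 h2
      simp [hF, this]
    · have h1 : deriv (deriv q) 1 = 0 := deriv_zero_of_not_differentiableAt hdiff
      have h2 : P 1 = 0 := by rw [← ode 1 ⟨zero_le_one, le_refl 1⟩]; exact h1
      simp [hF, h2]
  -- monotonicity of F, hence F ≡ 0
  have hmono : MonotoneOn F (Icc 0 1) := by
    apply monotoneOn_of_deriv_nonneg (convex_Icc 0 1) hFcont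
    · intro t ht
      rw [interior_Icc] at ht
      exact ((hFder t ht).differentiableAt).differentiableWithinAt
    · intro t ht
      rw [interior_Icc] at ht
      rw [(hFder t ht).deriv]
      have hqt : 0 < q t := hqpos t (Ioo_subset_Icc_self ht)
      positivity
  have hFzero : ∀ t ∈ Icc (0:ℝ) 1, F t = 0 := by
    intro t ht
    have h1 : F 0 ≤ F t := hmono ⟨le_refl 0, zero_le_one⟩ ht ht.1
    have h2 : F t ≤ F 1 := hmono ht ⟨zero_le_one, le_refl 1⟩ ht.2
    rw [hF0] at h1; rw [hF1] at h2
    linarith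
  -- deduce H = 0 on the interior
  have hHzero : ∀ t ∈ Ioo (0:ℝ) 1, H t = 0 := by
    intro t ht
    have hd : deriv F t = 0 := by
      have hev : F =ᶠ[𝓝 t] (fun _ => (0:ℝ)) :=
        Filter.eventuallyEq_of_mem (Icc_mem_nhds ht.1 ht.2) hFzero
      rw [hev.deriv_eq, deriv_const]
    have hD : P t ^ 2 + 4 / (q t) ^ 3 * (H t) ^ 2 = 0 := by
      rw [← (hFder t ht).deriv]; exact hd
    have hqt : 0 < q t := hqpos t (Ioo_subset_Icc_self ht)
    have h4 : 0 < 4 / (q t) ^ 3 := by positivity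
    by_contra hne
    have h5 : 0 < H t ^ 2 :=
      lt_of_le_of_ne (sq_nonneg (H t)) (Ne.symm (pow_ne_zero 2 hne))
    nlinarith [sq_nonneg (P t), mul_pos h4 h5]
  -- H 0 = 0 by continuity
  have hH0 : H 0 = 0 := by
    have h1 : Tendsto H (𝓝[Ioo (0:ℝ) 1] 0) (𝓝 (0:ℝ)) :=
      tendsto_const_nhds.congr'
        (Filter.eventuallyEq_of_mem self_mem_nhdsWithin
          (fun s hs => (hHzero s hs).symm))
    exact tendsto_nhds_unique hHtend0 h1
  -- conclude q is constant
  have := constant_of_derivWithin_zero (f := q) (a := (0:ℝ)) (b := 1)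
    (cfg.q₁_smooth.differentiableOn (by simp))
    (fun x hx => by
      rcases eq_or_lt_of_le hx.1 with h | h
      · rw [← h]; exact hH0
      · exact hHzero x ⟨h, hx.2⟩)
  exact this
end

section
/- Let r ∈ [0,1] and let (q₁, q₂) be a frozen planet configuration for parameter r. Then q₂'(t) < 0 for every t ∈ (0,1); in particular q₂ is strictly monotone decreasing on [0,1]. -/
open Set

theorem q₂_strictly_decreasing (r : ℝ) (hr : r ∈ Set.Icc (0:ℝ) 1)
    (cfg : FrozenPlanetConfig r) :
    (∀ t ∈ Set.Ioo (0:ℝ) 1, deriv cfg.q₂ t < 0) ∧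
    StrictAntiOn cfg.q₂ (Set.Icc 0 1) := by
  obtain ⟨hr0, hr1⟩ := hr
  -- deriv (deriv q₂) is negative on Ico 0 1
  have hneg : ∀ t ∈ Set.Ico (0:ℝ) 1, deriv (deriv cfg.q₂) t < 0 := by
    intro t ht
    rw [cfg.ode₂ t ht]
    have h1 : 0 < 2 / (cfg.q₂ t) ^ 2 :=
      div_pos two_pos (pow_pos (cfg.q₂_pos t ht) 2)
    have h2 : 0 ≤ r / (meanVal cfg.q₁ - meanVal cfg.q₂) ^ 2 :=
      div_nonneg hr0 (sq_nonneg _)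
    have h3 : 0 ≤ (1 - r) / (cfg.q₁ t - cfg.q₂ t) ^ 2 :=
      div_nonneg (by linarith) (sq_nonneg _)
    have : -2 / (cfg.q₂ t) ^ 2 = -(2 / (cfg.q₂ t) ^ 2) := by ring
    rw [this]; linarith
  -- deriv q₂ is differentiable (hence continuous) on Ico 0 1
  have hdiff : ∀ t ∈ Set.Ico (0:ℝ) 1, DifferentiableAt ℝ (deriv cfg.q₂) t := by
    intro t ht
    exact differentiableAt_of_deriv_ne_zero (ne_of_lt (hneg t ht))
  have hcont : ContinuousOn (deriv cfg.q₂) (Set.Ico 0 1) :=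
    fun t ht => (hdiff t ht).continuousAt.continuousWithinAt
  -- deriv q₂ strictly decreasing on Ico 0 1
  have hanti : StrictAntiOn (deriv cfg.q₂) (Set.Ico 0 1) := by
    apply strictAntiOn_of_deriv_neg (convex_Ico 0 1) hcont
    intro x hx
    rw [interior_Ico] at hx
    exact hneg x ⟨le_of_lt hx.1, hx.2⟩
  have key : ∀ t ∈ Set.Ioo (0:ℝ) 1, deriv cfg.q₂ t < 0 := by
    intro t ht
    have := hanti (show (0:ℝ) ∈ Set.Ico (0:ℝ) 1 by constructor <;> norm_num)
      ⟨le_of_lt ht.1, ht.2⟩ ht.1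
    rwa [cfg.bc₃] at this
  refine ⟨key, ?_⟩
  apply strictAntiOn_of_deriv_neg (convex_Icc 0 1) cfg.q₂_cont
  intro x hx
  rw [interior_Icc] at hx
  exact key x hx
end

section
/- Let r ∈ [0,1] and let (q₁, q₂) be a frozen planet configuration for parameter r. Then q₂(0) ≥ 1. -/
open Set

theorem q₂_initial_lower_bound (r : ℝ) (hr : r ∈ Set.Icc (0:ℝ) 1)
    (cfg : FrozenPlanetConfig r) :
    1 ≤ cfg.q₂ 0 := by
  obtain ⟨q₁, q₂, h₁s, h₁p, h₂c, h₂n, h₂s, h₂p, hode₁, hode₂, hlt, hbc₁, hbc₂, hbc₃, hbc₄⟩ := cfg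
  simp only at *
  set a := q₂ 0 with ha_def
  have ha : 0 < a := h₂p 0 ⟨le_refl _, zero_lt_one⟩
  -- second derivative bound
  have hdd_le : ∀ t ∈ Ico (0:ℝ) 1, deriv (deriv q₂) t ≤ -2 / (q₂ t) ^ 2 := by
    intro t ht
    rw [hode₂ t ht]
    have h1 : 0 ≤ r / (meanVal q₁ - meanVal q₂) ^ 2 := div_nonneg hr.1 (sq_nonneg _)
    have h2 : 0 ≤ (1 - r) / (q₁ t - q₂ t) ^ 2 :=
      div_nonneg (by linarith [hr.2]) (sq_nonneg _)
    linarith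
  have hdd_neg : ∀ t ∈ Ico (0:ℝ) 1, deriv (deriv q₂) t < 0 := by
    intro t ht
    have := hdd_le t ht
    have hq : 0 < q₂ t := h₂p t ht
    have : -2 / (q₂ t) ^ 2 < 0 := div_neg_of_neg_of_pos (by norm_num) (pow_pos hq 2)
    linarith [hdd_le t ht]
  -- smoothness on the open interval
  have hsm : ContDiffOn ℝ (⊤ : ℕ∞) q₂ (Ioo 0 1) := h₂s.mono Ioo_subset_Ico_self
  have hsm' : ContDiffOn ℝ (⊤ : ℕ∞) (deriv q₂) (Ioo 0 1) :=
    hsm.deriv_of_isOpen isOpen_Ioo (by simp)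
  have hdiff1 : ∀ t ∈ Ioo (0:ℝ) 1, DifferentiableAt ℝ q₂ t := fun t ht =>
    (hsm.contDiffAt (isOpen_Ioo.mem_nhds ht)).differentiableAt (by simp)
  have hdiff2 : ∀ t ∈ Ioo (0:ℝ) 1, DifferentiableAt ℝ (deriv q₂) t := fun t ht =>
    (hsm'.contDiffAt (isOpen_Ioo.mem_nhds ht)).differentiableAt (by simp)
  -- continuity of deriv q₂ at 0
  have hcont0 : ContinuousAt (deriv q₂) 0 := by
    have h0 : deriv (deriv q₂) 0 ≠ 0 := ne_of_lt (hdd_neg 0 ⟨le_refl _, zero_lt_one⟩)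
    exact (differentiableAt_of_deriv_ne_zero h0).continuousAt
  have hderiv_cont : ∀ b : ℝ, b < 1 → ContinuousOn (deriv q₂) (Icc 0 b) := by
    intro b hb t ht
    rcases eq_or_lt_of_le ht.1 with h | h
    · exact (h ▸ hcont0).continuousWithinAt
    · exact ((hdiff2 t ⟨h, lt_of_le_of_lt ht.2 hb⟩).continuousAt).continuousWithinAt
  -- deriv q₂ ≤ 0 on [0,1)
  have hF : ∀ b ∈ Ioo (0:ℝ) 1, ∀ t ∈ Icc (0:ℝ) b, deriv q₂ t ≤ 0 := by
    intro b hb t ht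
    have hanti : AntitoneOn (deriv q₂) (Icc 0 b) := by
      apply antitoneOn_of_deriv_nonpos (convex_Icc 0 b) (hderiv_cont b hb.2)
      · intro x hx
        rw [interior_Icc] at hx
        exact (hdiff2 x ⟨hx.1, hx.2.trans hb.2⟩).differentiableWithinAt
      · intro x hx
        rw [interior_Icc] at hx
        exact (hdd_neg x ⟨le_of_lt hx.1, hx.2.trans hb.2⟩).le
    have := hanti ⟨le_refl _, hb.1.le⟩ ht ht.1
    rwa [hbc₃] at this
  -- q₂ ≤ a on [0,1)
  have hq2cont : ∀ b : ℝ, b < 1 → ContinuousOn q₂ (Icc 0 b) := by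
    intro b hb
    exact h₂c.mono (Icc_subset_Icc (le_refl _) hb.le)
  have hq2le : ∀ t ∈ Ico (0:ℝ) 1, q₂ t ≤ a := by
    intro t ht
    rcases eq_or_lt_of_le ht.1 with h | h
    · rw [← h]
    · have hanti : AntitoneOn q₂ (Icc 0 t) := by
        apply antitoneOn_of_deriv_nonpos (convex_Icc 0 t) (hq2cont t ht.2)
        · intro x hx
          rw [interior_Icc] at hx
          exact (hdiff1 x ⟨hx.1, hx.2.trans ht.2⟩).differentiableWithinAt
        · intro x hx
          rw [interior_Icc] at hx
          exact hF t ⟨h, ht.2⟩ x ⟨hx.1.le, hx.2.le⟩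
      exact hanti ⟨le_refl _, h.le⟩ ⟨h.le, le_refl _⟩ h.le
  -- refined second derivative bound
  have hdd_le2 : ∀ t ∈ Ioo (0:ℝ) 1, deriv (deriv q₂) t ≤ -2 / a ^ 2 := by
    intro t ht
    have h1 := hdd_le t ⟨ht.1.le, ht.2⟩
    have h2 := hq2le t ⟨ht.1.le, ht.2⟩
    have h3 : 0 < q₂ t := h₂p t ⟨ht.1.le, ht.2⟩
    have : -2 / (q₂ t) ^ 2 ≤ -2 / a ^ 2 := by
      rw [div_le_div_iff₀ (pow_pos h3 2) (pow_pos ha 2)]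
      nlinarith
    linarith
  -- deriv q₂ t ≤ -2 t / a²
  have hF2 : ∀ b ∈ Ioo (0:ℝ) 1, deriv q₂ b + 2 * b / a ^ 2 ≤ 0 := by
    intro b hb
    have hanti : AntitoneOn (fun t => deriv q₂ t + 2 * t / a ^ 2) (Icc 0 b) := by
      apply antitoneOn_of_deriv_nonpos (convex_Icc 0 b)
      · exact (hderiv_cont b hb.2).add (by fun_prop)
      · intro x hx
        rw [interior_Icc] at hx
        exact ((hdiff2 x ⟨hx.1, hx.2.trans hb.2⟩).add (by fun_prop)).differentiableWithinAt
      · intro x hx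
        rw [interior_Icc] at hx
        have hx' : x ∈ Ioo (0:ℝ) 1 := ⟨hx.1, hx.2.trans hb.2⟩
        rw [deriv_fun_add (hdiff2 x hx') (by fun_prop)]
        have : deriv (fun t : ℝ => 2 * t / a ^ 2) x = 2 / a ^ 2 := by
          simp [mul_div_assoc]
          ring
        rw [this]
        have := hdd_le2 x hx'
        have h2 : -2 / a ^ 2 + 2 / a ^ 2 = 0 := by ring
        linarith
    have h := hanti ⟨le_refl _, hb.1.le⟩ ⟨hb.1.le, le_refl _⟩ hb.1.le
    simp only [mul_zero, zero_div, add_zero, hbc₃, zero_add] at h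
    exact h
  -- q₂ b ≤ a - b²/a²
  have hG : ∀ b ∈ Ioo (0:ℝ) 1, q₂ b + b ^ 2 / a ^ 2 ≤ a := by
    intro b hb
    have hanti : AntitoneOn (fun t => q₂ t + t ^ 2 / a ^ 2) (Icc 0 b) := by
      apply antitoneOn_of_deriv_nonpos (convex_Icc 0 b)
      · exact (hq2cont b hb.2).add (by fun_prop)
      · intro x hx
        rw [interior_Icc] at hx
        exact ((hdiff1 x ⟨hx.1, hx.2.trans hb.2⟩).add (by fun_prop)).differentiableWithinAt
      · intro x hx
        rw [interior_Icc] at hx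
        have hx' : x ∈ Ioo (0:ℝ) 1 := ⟨hx.1, hx.2.trans hb.2⟩
        rw [deriv_fun_add (hdiff1 x hx') (by fun_prop)]
        have : deriv (fun t : ℝ => t ^ 2 / a ^ 2) x = 2 * x / a ^ 2 := by
          rw [deriv_div_const, deriv_pow_field]
          ring
        rw [this]
        exact hF2 x hx' 
    have h := hanti ⟨le_refl _, hb.1.le⟩ ⟨hb.1.le, le_refl _⟩ hb.1.le
    simp only [ne_eq, OfNat.ofNat_ne_zero, not_false_eq_true, zero_pow, zero_div, add_zero] at h
    exact h
  -- take the limit b → 1⁻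
  have hlim : q₂ 1 ≤ a - 1 ^ 2 / a ^ 2 := by
    have ht1 : Filter.Tendsto q₂ (nhdsWithin 1 (Iio 1)) (nhds (q₂ 1)) := by
      have := (h₂c 1 ⟨zero_le_one, le_refl _⟩).tendsto
      apply this.mono_left
      rw [← nhdsWithin_Ioo_eq_nhdsLT (zero_lt_one (α := ℝ))]
      exact nhdsWithin_mono _ (Ioo_subset_Icc_self)
    have ht2 : Filter.Tendsto (fun b : ℝ => a - b ^ 2 / a ^ 2) (nhdsWithin 1 (Iio 1))
        (nhds (a - 1 ^ 2 / a ^ 2)) := by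
      apply Filter.Tendsto.mono_left _ nhdsWithin_le_nhds
      exact (continuous_const.sub ((continuous_pow 2).div_const _)).tendsto 1
    refine le_of_tendsto_of_tendsto ht1 ht2 ?_
    filter_upwards [Ioo_mem_nhdsLT zero_lt_one] with b hb
    linarith [hG b hb]
  rw [hbc₄] at hlim
  norm_num at hlim
  have h1 : 1 / a ^ 2 ≤ a := by rw [one_div]; exact hlim
  rw [div_le_iff₀ (pow_pos ha 2)] at h1
  nlinarith [h1, ha, sq_nonneg (a - 1), sq_nonneg (a + 1)]
end

section
/- Let r ∈ [0,1] and let (q₁, q₂) be a frozen planet configuration for parameter r. Then the mean values satisfy q̄₂ ≤ (1 - √(r/(1+r)))·q̄₁. -/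
open Set

lemma secondDeriv_nonpos_at_max {f : ℝ → ℝ} (hc : ContinuousOn f (Icc 0 1))
    {t : ℝ} (ht : t ∈ Icc (0:ℝ) 1) (hmax : IsMaxOn f (Icc 0 1) t)
    (h0 : deriv f 0 = 0) (h1 : deriv f 1 = 0) :
    deriv (deriv f) t ≤ 0 := by
  by_contra hpos
  push_neg at hpos
  have hdiff : DifferentiableAt ℝ (deriv f) t := by
    by_contra h
    rw [deriv_zero_of_not_differentiableAt h] at hpos
    exact lt_irrefl 0 hpos
  have hderiv : HasDerivAt (deriv f) (deriv (deriv f) t) t := hdiff.hasDerivAt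
  have hslope := hasDerivAt_iff_tendsto_slope.mp hderiv
  have hev0 : ∀ᶠ s in nhdsWithin t {t}ᶜ, 0 < slope (deriv f) t s :=
    hslope.eventually (eventually_gt_nhds hpos)
  rcases lt_or_eq_of_le ht.2 with ht1 | ht1
  · -- t < 1
    have hdt : deriv f t = 0 := by
      rcases eq_or_lt_of_le ht.1 with h0' | h0'
      · rw [← h0']; exact h0
      · exact (hmax.isLocalMax (Icc_mem_nhds h0' ht1)).deriv_eq_zero
    have hev : ∀ᶠ s in nhdsWithin t (Ioi t), 0 < deriv f s := by
      have h2 : ∀ᶠ s in nhdsWithin t (Ioi t), 0 < slope (deriv f) t s :=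
        hev0.filter_mono (nhdsWithin_mono t fun s hs => ne_of_gt hs)
      filter_upwards [h2, self_mem_nhdsWithin] with s hs hs'
      have hst : (0:ℝ) < s - t := sub_pos.mpr hs'
      have heq : slope (deriv f) t s = deriv f s / (s - t) := by
        simp [slope, hdt, div_eq_inv_mul]
      rw [heq] at hs
      rcases div_pos_iff.mp hs with ⟨h, _⟩ | ⟨_, h⟩
      · exact h
      · linarith
    rcases mem_nhdsGT_iff_exists_Ioo_subset.mp hev with ⟨u, hu, hsub⟩
    set b := min u 1 with hb
    have htb : t < b := lt_min hu ht1
    have hbsub : Icc t b ⊆ Icc 0 1 := Icc_subset_Icc ht.1 (min_le_right _ _)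
    have hmono : StrictMonoOn f (Icc t b) := by
      apply strictMonoOn_of_deriv_pos (convex_Icc _ _) (hc.mono hbsub)
      intro x hx
      rw [interior_Icc] at hx
      exact hsub ⟨hx.1, lt_of_lt_of_le hx.2 (min_le_left _ _)⟩
    have hlt := hmono (left_mem_Icc.mpr htb.le) (right_mem_Icc.mpr htb.le) htb
    exact absurd (hmax (hbsub (right_mem_Icc.mpr htb.le))) (not_le.mpr hlt)
  · -- t = 1
    subst ht1
    have hev : ∀ᶠ s in nhdsWithin (1:ℝ) (Iio 1), deriv f s < 0 := by
      have h2 : ∀ᶠ s in nhdsWithin (1:ℝ) (Iio 1), 0 < slope (deriv f) 1 s :=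
        hev0.filter_mono (nhdsWithin_mono 1 fun s hs => ne_of_lt hs)
      filter_upwards [h2, self_mem_nhdsWithin] with s hs hs'
      have hst : s - 1 < 0 := sub_neg.mpr hs'
      have heq : slope (deriv f) 1 s = deriv f s / (s - 1) := by
        simp [slope, h1, div_eq_inv_mul]
      rw [heq] at hs
      rcases div_pos_iff.mp hs with ⟨_, h⟩ | ⟨h, _⟩
      · linarith
      · exact h
    rcases mem_nhdsLT_iff_exists_Ioo_subset.mp hev with ⟨u, hu, hsub⟩
    set a := max u 0 with ha
    have hta : a < 1 := max_lt hu zero_lt_one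
    have hasub : Icc a 1 ⊆ Icc 0 1 := Icc_subset_Icc (le_max_right _ _) le_rfl
    have hanti : StrictAntiOn f (Icc a 1) := by
      apply strictAntiOn_of_deriv_neg (convex_Icc _ _) (hc.mono hasub)
      intro x hx
      rw [interior_Icc] at hx
      exact hsub ⟨lt_of_le_of_lt (le_max_left _ _) hx.1, hx.2⟩
    have hlt := hanti (left_mem_Icc.mpr hta.le) (right_mem_Icc.mpr hta.le) hta
    exact absurd (hmax (hasub (left_mem_Icc.mpr hta.le))) (not_le.mpr hlt)

theorem mean_values_inequality' (r : ℝ) (hr : r ∈ Set.Icc (0:ℝ) 1)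
    (q₁ q₂ : ℝ → ℝ)
    (q₁_smooth : ContDiffOn ℝ (⊤ : ℕ∞) q₁ (Set.Icc 0 1))
    (q₁_pos : ∀ t ∈ Set.Icc (0:ℝ) 1, 0 < q₁ t)
    (q₂_cont : ContinuousOn q₂ (Set.Icc 0 1))
    (q₂_nonneg : ∀ t ∈ Set.Icc (0:ℝ) 1, 0 ≤ q₂ t)
    (ode₁ : ∀ t ∈ Set.Icc (0:ℝ) 1,
      deriv (deriv q₁) t =
        -2 / (q₁ t) ^ 2 + r / (meanVal q₁ - meanVal q₂) ^ 2
          + (1 - r) / (q₁ t - q₂ t) ^ 2)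
    (q₂_lt_q₁ : ∀ t ∈ Set.Icc (0:ℝ) 1, q₂ t < q₁ t)
    (bc₁ : deriv q₁ 0 = 0) (bc₂ : deriv q₁ 1 = 0) :
    meanVal q₂ ≤ (1 - Real.sqrt (r / (1 + r))) * meanVal q₁ := by
  have hr0 := hr.1
  have hr1 := hr.2
  have h1r : (0:ℝ) < 1 + r := by linarith
  have hq₁c : ContinuousOn q₁ (Icc 0 1) := q₁_smooth.continuousOn
  have huIcc : uIcc (0:ℝ) 1 = Icc 0 1 := uIcc_of_le zero_le_one
  have hI1 : IntervalIntegrable q₁ MeasureTheory.volume 0 1 :=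
    (huIcc ▸ hq₁c).intervalIntegrable
  have hI2 : IntervalIntegrable q₂ MeasureTheory.volume 0 1 :=
    (huIcc ▸ q₂_cont).intervalIntegrable
  -- Δ > 0
  have hΔeq : meanVal q₁ - meanVal q₂ = ∫ t in (0:ℝ)..1, (q₁ t - q₂ t) := by
    rw [meanVal, meanVal, ← intervalIntegral.integral_sub hI1 hI2]
  have hΔ : 0 < meanVal q₁ - meanVal q₂ := by
    rw [hΔeq]
    apply intervalIntegral.intervalIntegral_pos_of_pos_on (hI1.sub hI2)
    · intro x hx
      have hx' : x ∈ Icc (0:ℝ) 1 := Ioo_subset_Icc_self hx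
      exact sub_pos.mpr (q₂_lt_q₁ x hx')
    · exact zero_lt_one
  have hm₁ : 0 < meanVal q₁ := by
    rw [meanVal]
    apply intervalIntegral.intervalIntegral_pos_of_pos_on hI1
    · intro x hx; exact q₁_pos x (Ioo_subset_Icc_self hx)
    · exact zero_lt_one
  -- max point
  obtain ⟨t0, ht0, hmax⟩ := isCompact_Icc.exists_isMaxOn
    (nonempty_Icc.mpr zero_le_one) hq₁c
  set M := q₁ t0 with hM
  have hMpos : 0 < M := q₁_pos t0 ht0
  have h2nd : deriv (deriv q₁) t0 ≤ 0 :=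
    secondDeriv_nonpos_at_max hq₁c ht0 hmax bc₁ bc₂
  have hode := ode₁ t0 ht0
  rw [hode] at h2nd
  -- pointwise bounds at t0
  have hq₂0 : 0 ≤ q₂ t0 := q₂_nonneg t0 ht0
  have hsubpos : 0 < q₁ t0 - q₂ t0 := sub_pos.mpr (q₂_lt_q₁ t0 ht0)
  have hsuble : q₁ t0 - q₂ t0 ≤ M := by simp [hM]; linarith
  have hsq : (q₁ t0 - q₂ t0) ^ 2 ≤ M ^ 2 := by nlinarith
  have hfrac : (1 - r) / M ^ 2 ≤ (1 - r) / (q₁ t0 - q₂ t0) ^ 2 :=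
    div_le_div_of_nonneg_left (by linarith) (by positivity) hsq
  have hkey : r / (meanVal q₁ - meanVal q₂) ^ 2 ≤ (1 + r) / M ^ 2 := by
    have : (1 + r) / M ^ 2 = 2 / M ^ 2 - (1 - r) / M ^ 2 := by ring
    rw [this]
    have h2M : -2 / M ^ 2 = -(2 / M ^ 2) := by ring
    linarith [h2nd, hfrac]
  -- q̄₁ ≤ M
  have hmean_le : meanVal q₁ ≤ M := by
    have := intervalIntegral.integral_mono_on zero_le_one hI1
      (intervalIntegrable_const (c := M)) (fun x hx => hmax hx)
    simpa [meanVal] using this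
  have hkey2 : r / (meanVal q₁ - meanVal q₂) ^ 2 ≤ (1 + r) / (meanVal q₁) ^ 2 := by
    refine le_trans hkey ?_
    apply div_le_div_of_nonneg_left (by linarith) (by positivity)
    nlinarith
  have hmul : r * (meanVal q₁) ^ 2 ≤ (1 + r) * (meanVal q₁ - meanVal q₂) ^ 2 := by
    rw [div_le_div_iff₀ (by positivity) (by positivity)] at hkey2
    linarith
  -- take square roots
  have hsqrt : Real.sqrt (r / (1 + r)) * meanVal q₁ ≤ meanVal q₁ - meanVal q₂ := by
    have h1 : Real.sqrt (r / (1 + r)) * meanVal q₁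
        = Real.sqrt (r / (1 + r) * (meanVal q₁) ^ 2) := by
      rw [Real.sqrt_mul (by positivity), Real.sqrt_sq hm₁.le]
    have h2 : r / (1 + r) * (meanVal q₁) ^ 2 ≤ (meanVal q₁ - meanVal q₂) ^ 2 := by
      rw [div_mul_eq_mul_div, div_le_iff₀ h1r]
      linarith
    rw [h1]
    calc Real.sqrt (r / (1 + r) * (meanVal q₁) ^ 2)
        ≤ Real.sqrt ((meanVal q₁ - meanVal q₂) ^ 2) := Real.sqrt_le_sqrt h2
      _ = meanVal q₁ - meanVal q₂ := Real.sqrt_sq hΔ.le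
  nlinarith [hsqrt]

theorem mean_values_inequality (r : ℝ) (hr : r ∈ Set.Icc (0:ℝ) 1)
    (cfg : FrozenPlanetConfig r) :
    meanVal cfg.q₂ ≤ (1 - Real.sqrt (r / (1 + r))) * meanVal cfg.q₁ :=
  mean_values_inequality' r hr cfg.q₁ cfg.q₂ cfg.q₁_smooth cfg.q₁_pos
    cfg.q₂_cont cfg.q₂_nonneg cfg.ode₁ cfg.q₂_lt_q₁ cfg.bc₁ cfg.bc₂
end

section
/- Let r ∈ [0,1] and let (q₁, q₂) be a frozen planet configuration for parameter r. Then q₂(0) ≤ 2·q̄₂, where q̄₂ = ∫₀¹ q₂(t) dt; in particular, combined with q₂(0) ≥ 1, one has q̄₂ ≥ 1/2. -/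
open Set

theorem mean_q₂_lower_bound (r : ℝ) (hr : r ∈ Set.Icc (0:ℝ) 1)
    (cfg : FrozenPlanetConfig r) :
    cfg.q₂ 0 ≤ 2 * meanVal cfg.q₂ ∧ 1 / 2 ≤ meanVal cfg.q₂ := by
  obtain ⟨hr0, hr1⟩ := hr
  set q : ℝ → ℝ := cfg.q₂ with hq
  have hq0pos : 0 < q 0 := cfg.q₂_pos 0 ⟨le_refl 0, zero_lt_one⟩
  -- second derivative bounds
  have hneg : ∀ t ∈ Set.Ico (0:ℝ) 1, deriv (deriv q) t ≤ -(2 / (q t) ^ 2) := by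
    intro t ht
    rw [cfg.ode₂ t ht]
    have h1 : 0 ≤ r / (meanVal cfg.q₁ - meanVal cfg.q₂) ^ 2 := div_nonneg hr0 (sq_nonneg _)
    have h2 : 0 ≤ (1 - r) / (cfg.q₁ t - q t) ^ 2 := div_nonneg (by linarith) (sq_nonneg _)
    have h3 : (-2 : ℝ) / (q t) ^ 2 = -(2 / (q t) ^ 2) := by ring
    linarith
  have hlt : ∀ t ∈ Set.Ico (0:ℝ) 1, deriv (deriv q) t < 0 := by
    intro t ht
    have := hneg t ht
    have hp : 0 < 2 / (q t) ^ 2 := div_pos two_pos (pow_pos (cfg.q₂_pos t ht) 2)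
    linarith
  have hdiffg : ∀ t ∈ Set.Ico (0:ℝ) 1, DifferentiableAt ℝ (deriv q) t := fun t ht =>
    differentiableAt_of_deriv_ne_zero (hlt t ht).ne
  -- deriv q ≤ 0 on [0,1)
  have hg_nonpos : ∀ x ∈ Set.Ico (0:ℝ) 1, deriv q x ≤ 0 := by
    intro x hx
    rcases eq_or_lt_of_le hx.1 with h0 | h0
    · rw [← h0, cfg.bc₃]
    · have hmono : AntitoneOn (deriv q) (Set.Icc 0 x) := by
        apply antitoneOn_of_deriv_nonpos (convex_Icc 0 x)
        · intro t ht
          exact (hdiffg t ⟨ht.1, lt_of_le_of_lt ht.2 hx.2⟩).continuousAt.continuousWithinAt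
        · intro t ht
          rw [interior_Icc] at ht
          exact (hdiffg t ⟨ht.1.le, lt_trans ht.2 hx.2⟩).differentiableWithinAt
        · intro t ht
          rw [interior_Icc] at ht
          exact (hlt t ⟨ht.1.le, lt_trans ht.2 hx.2⟩).le
      have := hmono (Set.left_mem_Icc.2 h0.le) (Set.right_mem_Icc.2 h0.le) h0.le
      rwa [cfg.bc₃] at this
  -- q is differentiable at interior points
  have hqdiff : ∀ t ∈ Set.Ioo (0:ℝ) 1, DifferentiableAt ℝ q t := by
    intro t ht
    exact (cfg.q₂_smooth.contDiffAt (Ico_mem_nhds ht.1 ht.2)).differentiableAt (by simp)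
  -- q is antitone on [0,1]
  have hqmono : AntitoneOn q (Set.Icc 0 1) := by
    apply antitoneOn_of_deriv_nonpos (convex_Icc 0 1) cfg.q₂_cont
    · intro t ht
      rw [interior_Icc] at ht
      exact (hqdiff t ht).differentiableWithinAt
    · intro t ht
      rw [interior_Icc] at ht
      exact hg_nonpos t ⟨ht.1.le, ht.2⟩
  have hqle : ∀ t ∈ Set.Icc (0:ℝ) 1, q t ≤ q 0 := fun t ht =>
    hqmono (Set.left_mem_Icc.2 zero_le_one) ht ht.1
  -- set c := 2 / (q 0)^2
  set c : ℝ := 2 / (q 0) ^ 2 with hc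
  have hcpos : 0 < c := div_pos two_pos (pow_pos hq0pos 2)
  have hdd_le : ∀ t ∈ Set.Ico (0:ℝ) 1, deriv (deriv q) t ≤ -c := by
    intro t ht
    have h1 := hneg t ht
    have hqt : 0 < q t := cfg.q₂_pos t ht
    have hle : q t ≤ q 0 := hqle t ⟨ht.1, ht.2.le⟩
    have h2 : c ≤ 2 / (q t) ^ 2 := by
      rw [hc]
      gcongr
    linarith
  -- deriv q x ≤ -c * x on [0,1)
  have hg_le : ∀ x ∈ Set.Ico (0:ℝ) 1, deriv q x ≤ -c * x := by
    intro x hx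
    rcases eq_or_lt_of_le hx.1 with h0 | h0
    · rw [← h0, cfg.bc₃, mul_zero]
    · have hmono : AntitoneOn (fun t => deriv q t + c * t) (Set.Icc 0 x) := by
        apply antitoneOn_of_deriv_nonpos (convex_Icc 0 x)
        · intro t ht
          exact ((hdiffg t ⟨ht.1, lt_of_le_of_lt ht.2 hx.2⟩).continuousAt.add
            ((continuous_const.mul continuous_id).continuousAt)).continuousWithinAt
        · intro t ht
          rw [interior_Icc] at ht
          exact ((hdiffg t ⟨ht.1.le, lt_trans ht.2 hx.2⟩).add
            ((differentiable_id.const_mul c) t)).differentiableWithinAt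
        · intro t ht
          rw [interior_Icc] at ht
          have ht' : t ∈ Set.Ico (0:ℝ) 1 := ⟨ht.1.le, lt_trans ht.2 hx.2⟩
          have hd : deriv (fun t => deriv q t + c * t) t = deriv (deriv q) t + c := by
            have := ((hdiffg t ht').hasDerivAt.add ((hasDerivAt_id t).const_mul c)).deriv
            rw [mul_one] at this
            exact this
          rw [hd]
          linarith [hdd_le t ht']
      have := hmono (Set.left_mem_Icc.2 h0.le) (Set.right_mem_Icc.2 h0.le) h0.le
      simp only [cfg.bc₃, mul_zero, add_zero] at this
      linarith [(cfg.bc₃ : deriv q 0 = 0)]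
  -- ψ t = q t + c * t^2 / 2 is antitone on [0,1]
  have hψ : AntitoneOn (fun t => q t + c * t ^ 2 / 2) (Set.Icc 0 1) := by
    apply antitoneOn_of_deriv_nonpos (convex_Icc 0 1)
    · exact cfg.q₂_cont.add (Continuous.continuousOn (by continuity))
    · intro t ht
      rw [interior_Icc] at ht
      exact ((hqdiff t ht).add (by fun_prop)).differentiableWithinAt
    · intro t ht
      rw [interior_Icc] at ht
      have hd : deriv (fun t => q t + c * t ^ 2 / 2) t = deriv q t + c * t := by
        have h2 : HasDerivAt (fun t : ℝ => c * t ^ 2 / 2) (c * t) t := by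
          have := (hasDerivAt_pow 2 t).const_mul c
          have := this.div_const 2
          exact this.congr_deriv (by push_cast; ring)
        have := ((hqdiff t ht).hasDerivAt.add h2).deriv
        exact this
      rw [hd]
      have := hg_le t ⟨ht.1.le, ht.2⟩
      linarith
  have hkey : 1 ≤ q 0 := by
    have h01 := hψ (Set.left_mem_Icc.2 zero_le_one) (Set.right_mem_Icc.2 zero_le_one) zero_le_one
    have hq1 : q 1 = 0 := cfg.bc₄
    have h01' : q 1 + c * 1 ^ 2 / 2 ≤ q 0 + c * 0 ^ 2 / 2 := h01
    rw [hq1] at h01'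
    have h02 : c ≤ 2 * q 0 := by nlinarith
    rw [hc, div_le_iff₀ (by positivity : (0:ℝ) < q 0 ^ 2)] at h02
    by_contra hcon
    push_neg at hcon
    have h3 : q 0 ^ 3 < 1 := pow_lt_one₀ hq0pos.le hcon three_ne_zero
    nlinarith [h02]
  -- concavity and chord bound
  have hconc : StrictConcaveOn ℝ (Set.Icc (0:ℝ) 1) q := by
    apply strictConcaveOn_of_deriv2_neg (convex_Icc 0 1) cfg.q₂_cont
    intro t ht
    rw [interior_Icc] at ht
    simpa [Function.iterate_succ, Function.iterate_zero, Function.comp] using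
      hlt t ⟨ht.1.le, ht.2⟩
  have hchord : ∀ t ∈ Set.Icc (0:ℝ) 1, (1 - t) * q 0 ≤ q t := by
    intro t ht
    have h := hconc.concaveOn.2 (Set.left_mem_Icc.2 zero_le_one)
      (Set.right_mem_Icc.2 zero_le_one) (by linarith [ht.2] : (0:ℝ) ≤ 1 - t) ht.1
      (by ring : (1 - t) + t = 1)
    simp only [smul_eq_mul, mul_zero, mul_one, zero_add] at h
    have hq1 : q 1 = 0 := cfg.bc₄
    rw [hq1] at h
    linarith
  -- integrate
  have hint : IntervalIntegrable q MeasureTheory.volume 0 1 := by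
    apply ContinuousOn.intervalIntegrable
    rw [Set.uIcc_of_le zero_le_one]
    exact cfg.q₂_cont
  have hint2 : IntervalIntegrable (fun t => (1 - t) * q 0) MeasureTheory.volume 0 1 :=
    (Continuous.continuousOn ((continuous_const.sub continuous_id).mul continuous_const)).intervalIntegrable
  have hmean : q 0 / 2 ≤ meanVal q := by
    have hle := intervalIntegral.integral_mono_on zero_le_one hint2 hint hchord
    have hcalc : (∫ t in (0:ℝ)..1, (1 - t) * q 0) = q 0 / 2 := by
      rw [intervalIntegral.integral_mul_const]
      have : (∫ t in (0:ℝ)..1, (1 - t)) = 1 / 2 := by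
        rw [intervalIntegral.integral_sub intervalIntegrable_const
          (continuous_id'.intervalIntegrable 0 1)]
        rw [integral_id]
        norm_num
      rw [this]
      ring
    rw [hcalc] at hle
    exact hle
  exact ⟨by linarith, by linarith⟩
end

section
/- For every α > 0 and every q₀ > 0, with f_α(q) = -q^{-α}, the ratio of the average position to the initial position of the free fall in the potential f_α equals κ(α) = Γ((4+α)/(2α))·Γ((1+α)/α) / (Γ((2+α)/α)·Γ((2+α)/(2α))); concretely, (∫₀^{q₀} q/√(f_α(q₀) - f_α(q)) dq) / (∫₀^{q₀} 1/√(f_α(q₀) - f_α(q)) dq) = κ(α)·q₀. -/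
/-!
Substituting `q = q₀ t^{1/α}` turns `f_α(q₀) - f_α(q)` into `q₀^{-α} (1 - t) / t`, so the moment
`∫₀^{q₀} q^p / √(f_α(q₀) - f_α(q)) dq` becomes `q₀^{p+1+α/2} / α` times the Beta value
`B((p+1)/α + 1/2, 1/2)`. The ratio of the first to the zeroth moment is therefore `q₀` times a
quotient of Beta values, and writing these through `Γ` the factors `Γ(1/2)` cancel, leaving `κ(α)`.
-/
open Set Real MeasureTheory

lemma integral_rpow_mul_one_sub_rpow_eq_beta {a b : ℝ} (ha : 0 < a) (hb : 0 < b) :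
    ∫ t in (0:ℝ)..1, t ^ (a - 1) * (1 - t) ^ (b - 1) = ProbabilityTheory.beta a b := by
  rw [ProbabilityTheory.beta_eq_betaIntegralReal a b ha hb, Complex.betaIntegral,
    intervalIntegral.integral_congr
      (g := fun t : ℝ => ((t ^ (a - 1) * (1 - t) ^ (b - 1) : ℝ) : ℂ)),
    intervalIntegral.integral_ofReal, Complex.ofReal_re]
  intro t ht
  rw [uIcc_of_le zero_le_one] at ht
  simp [Complex.ofReal_cpow ht.1, Complex.ofReal_cpow (sub_nonneg.2 ht.2)]

lemma sqrt_neg_rpow_neg_sub_neg_mul_rpow_inv {α q₀ t : ℝ} (hα : 0 < α) (hq₀ : 0 < q₀)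
    (ht₀ : 0 < t) (ht₁ : t ≤ 1) :
    √(-(q₀ ^ (-α)) - -((q₀ * t ^ α⁻¹) ^ (-α))) =
      q₀ ^ (-(α / 2)) * (1 - t) ^ (1 / 2 : ℝ) * t ^ (-(1 / 2) : ℝ) := by
  have gap :
      -(q₀ ^ (-α)) - -((q₀ * t ^ α⁻¹) ^ (-α)) = q₀ ^ (-α) * (1 - t) * t ^ (-1 : ℝ) := by
    rw [mul_rpow hq₀.le (by positivity), ← rpow_mul ht₀.le, inv_mul_eq_div, neg_div,
      div_self hα.ne', rpow_neg_one]
    field_simp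
    ring
  rw [gap, sqrt_eq_rpow, mul_rpow (by positivity) (by positivity),
    mul_rpow (by positivity) (sub_nonneg.2 ht₁), ← rpow_mul hq₀.le, ← rpow_mul ht₀.le]
  ring_nf

lemma jacobian_mul_integrand_comp_mul_rpow_inv {α q₀ p t : ℝ} (hα : 0 < α) (hq₀ : 0 < q₀)
    (ht : t ∈ Ioo (0:ℝ) 1) :
    (q₀ * (α⁻¹ * t ^ (α⁻¹ - 1))) *
        ((q₀ * t ^ α⁻¹) ^ p / √(-(q₀ ^ (-α)) - -((q₀ * t ^ α⁻¹) ^ (-α)))) =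
      q₀ ^ (p + 1 + α / 2) / α *
        (t ^ ((p + 1) / α + 1 / 2 - 1) * (1 - t) ^ ((1 / 2 : ℝ) - 1)) := by
  obtain ⟨ht₀, ht₁⟩ := ht
  have h1t : 0 < 1 - t := sub_pos.2 ht₁
  rw [sqrt_neg_rpow_neg_sub_neg_mul_rpow_inv hα hq₀ ht₀ ht₁.le, mul_rpow hq₀.le (by positivity),
    ← rpow_mul ht₀.le, div_eq_mul_inv, mul_inv, mul_inv, ← rpow_neg hq₀.le, ← rpow_neg h1t.le,
    ← rpow_neg ht₀.le, show (p + 1) / α + 1 / 2 - 1 = (α⁻¹ - 1) + α⁻¹ * p + 1 / 2 by ring,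
    show (1 / 2 : ℝ) - 1 = -(1 / 2) by norm_num, rpow_add ht₀, rpow_add ht₀, rpow_add hq₀,
    rpow_add hq₀, rpow_one, neg_neg, neg_neg]
  ring

lemma integral_rpow_div_sqrt_neg_rpow_neg_sub_eq_beta {α q₀ p : ℝ} (hα : 0 < α) (hq₀ : 0 < q₀)
    (hp : -1 < p + α / 2) :
    ∫ q in (0:ℝ)..q₀, q ^ p / √(-(q₀ ^ (-α)) - -(q ^ (-α))) =
      q₀ ^ (p + 1 + α / 2) / α * ProbabilityTheory.beta ((p + 1) / α + 1 / 2) (1 / 2) := by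
  have hsubst := integral_Icc_deriv_smul_of_deriv_nonneg
    (f := fun t => q₀ * t ^ α⁻¹) (f' := fun t => q₀ * (α⁻¹ * t ^ (α⁻¹ - 1)))
    (g := fun q => q ^ p / √(-(q₀ ^ (-α)) - -(q ^ (-α)))) (a := 0) (b := 1)
    ((continuousOn_id.rpow_const fun _ _ => Or.inr (by positivity)).const_smul q₀)
    (fun t ht => (hasDerivAt_rpow_const (Or.inl ht.1.ne')).const_mul q₀)
    (fun t ht => by have := ht.1; positivity) zero_le_one
  simp only [smul_eq_mul, zero_rpow (inv_pos.2 hα).ne', one_rpow, mul_zero, mul_one] at hsubst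
  rw [intervalIntegral.integral_of_le hq₀.le, ← integral_Icc_eq_integral_Ioc, ← hsubst,
    integral_Icc_eq_integral_Ioo, setIntegral_congr_fun measurableSet_Ioo
      fun t ht => jacobian_mul_integrand_comp_mul_rpow_inv hα hq₀ ht, integral_const_mul,
    ← integral_Icc_eq_integral_Ioo, integral_Icc_eq_integral_Ioc,
    ← intervalIntegral.integral_of_le zero_le_one,
    integral_rpow_mul_one_sub_rpow_eq_beta _ one_half_pos]
  rw [show (p + 1) / α + 1 / 2 = (p + α / 2 + 1) / α by field_simp; ring]
  exact div_pos (by linarith) hα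

theorem mean_free_fall_ratio (α : ℝ) (hα : 0 < α) (q₀ : ℝ) (hq₀ : 0 < q₀) :
    (∫ q in (0:ℝ)..q₀, q / Real.sqrt (-(q₀ ^ (-α)) - -(q ^ (-α)))) /
      (∫ q in (0:ℝ)..q₀, 1 / Real.sqrt (-(q₀ ^ (-α)) - -(q ^ (-α)))) =
    (Real.Gamma ((4 + α) / (2 * α)) * Real.Gamma ((1 + α) / α) /
      (Real.Gamma ((2 + α) / α) * Real.Gamma ((2 + α) / (2 * α)))) * q₀ := by
  have first := integral_rpow_div_sqrt_neg_rpow_neg_sub_eq_beta hα hq₀ (p := 1) (by linarith)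
  have zeroth := integral_rpow_div_sqrt_neg_rpow_neg_sub_eq_beta hα hq₀ (p := 0) (by linarith)
  simp only [rpow_one, rpow_zero] at first zeroth
  rw [first, zeroth, ProbabilityTheory.beta, ProbabilityTheory.beta,
    show (1 + 1) / α + 1 / 2 = (4 + α) / (2 * α) by field_simp; ring,
    show (4 + α) / (2 * α) + 1 / 2 = (2 + α) / α by field_simp; ring,
    show (0 + 1) / α + 1 / 2 = (2 + α) / (2 * α) by field_simp; ring,
    show (2 + α) / (2 * α) + 1 / 2 = (1 + α) / α by field_simp; ring,
    show (1 : ℝ) + 1 + α / 2 = 1 + (0 + 1 + α / 2) by ring, rpow_add hq₀, rpow_one]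
  field_simp
end

section
/- For the Newtonian potential f₁(q) = -1/q and any q₀ > 0, the ratio of the average position to the initial position of the free fall equals 3/4; concretely, (∫₀^{q₀} q/√(1/q - 1/q₀) dq) / (∫₀^{q₀} 1/√(1/q - 1/q₀) dq) = (3/4)·q₀. -/
open Set Real

lemma gamma_half_sq' : Complex.Gamma (1/2) * Complex.Gamma (1/2) = (π : ℂ) := by
  rw [Complex.Gamma_one_half_eq,
    ← Complex.cpow_add _ _ (Complex.ofReal_ne_zero.mpr Real.pi_ne_zero)]
  norm_num

lemma complex_Gamma_two' : Complex.Gamma 2 = 1 := by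
  have := Complex.Gamma_add_one 1 one_ne_zero
  simpa [Complex.Gamma_one] using this

lemma complex_Gamma_three' : Complex.Gamma 3 = 2 := by
  have := Complex.Gamma_add_one 2 two_ne_zero
  rw [show (2:ℂ)+1 = 3 by norm_num, complex_Gamma_two'] at this
  simpa using this

lemma complex_Gamma_three_halves' :
    Complex.Gamma (3/2) = (1/2) * Complex.Gamma (1/2) := by
  have := Complex.Gamma_add_one (1/2) (by norm_num)
  rw [show (1/2 : ℂ) + 1 = 3/2 by norm_num] at this
  exact this

lemma beta32' : Complex.betaIntegral (3/2) (1/2) = (π : ℂ) / 2 := by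
  have h := Complex.Gamma_mul_Gamma_eq_betaIntegral (s := 3/2) (t := 1/2)
    (by norm_num) (by norm_num)
  rw [show (3/2 : ℂ) + 1/2 = 2 by norm_num, complex_Gamma_two', one_mul] at h
  rw [complex_Gamma_three_halves', mul_assoc, gamma_half_sq'] at h
  rw [← h]; ring

lemma beta52' : Complex.betaIntegral (5/2) (1/2) = 3 * (π : ℂ) / 8 := by
  have h := Complex.Gamma_mul_Gamma_eq_betaIntegral (s := 5/2) (t := 1/2)
    (by norm_num) (by norm_num)
  rw [show (5/2 : ℂ) + 1/2 = 3 by norm_num, complex_Gamma_three'] at h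
  have h52 : Complex.Gamma (5/2) = (3/2) * Complex.Gamma (3/2) := by
    have := Complex.Gamma_add_one (3/2) (by norm_num)
    rw [show (3/2 : ℂ) + 1 = 5/2 by norm_num] at this
    exact this
  rw [h52, complex_Gamma_three_halves', mul_assoc, mul_assoc, gamma_half_sq'] at h
  have : Complex.betaIntegral (5/2) (1/2) = (3/2 * (1/2 * (π:ℂ))) / 2 := by
    rw [eq_div_iff (two_ne_zero (α := ℂ))]; linear_combination -h
  rw [this]; ring

lemma beta_real_integral' (q₀ : ℝ) (hq₀ : 0 < q₀) (s : ℝ) :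
    ∫ q in (0:ℝ)..q₀, q ^ (s - 1) * (q₀ - q) ^ (-(1/2) : ℝ)
      = q₀ ^ (s - 1/2) * (Complex.betaIntegral s (1/2)).re := by
  have key : ((∫ q in (0:ℝ)..q₀, q ^ (s - 1) * (q₀ - q) ^ (-(1/2) : ℝ) : ℝ) : ℂ)
      = (q₀ : ℂ) ^ ((s : ℂ) + 1/2 - 1) * Complex.betaIntegral s (1/2) := by
    rw [← intervalIntegral.integral_ofReal, ← Complex.betaIntegral_scaled (s : ℂ) (1/2) hq₀]
    refine intervalIntegral.integral_congr fun x hx => ?_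
    rw [uIcc_of_le hq₀.le] at hx
    have hx0 : (0:ℝ) ≤ x := hx.1
    have hx1 : (0:ℝ) ≤ q₀ - x := by linarith [hx.2]
    push_cast
    rw [Complex.ofReal_cpow hx0, Complex.ofReal_cpow hx1]
    push_cast
    norm_num
  have h2 : (q₀ : ℂ) ^ ((s : ℂ) + 1/2 - 1) = ((q₀ ^ (s - 1/2) : ℝ) : ℂ) := by
    rw [Complex.ofReal_cpow hq₀.le]
    push_cast
    ring_nf
  rw [h2] at key
  have := congrArg Complex.re key
  rwa [Complex.ofReal_re, Complex.re_ofReal_mul] at this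

lemma pointwise_integrand' (q₀ : ℝ) (hq₀ : 0 < q₀) (k : ℕ) {x : ℝ} (hx : x ∈ Icc (0:ℝ) q₀) :
    x ^ k / Real.sqrt (1/x - 1/q₀)
      = Real.sqrt q₀ * (x ^ ((k : ℝ) + 1/2) * (q₀ - x) ^ (-(1/2) : ℝ)) := by
  rcases eq_or_lt_of_le hx.1 with h0 | h0
  · subst h0
    have hz : Real.sqrt (1/(0:ℝ) - 1/q₀) = 0 := by
      apply Real.sqrt_eq_zero'.mpr
      simp
      positivity
    rw [hz, div_zero, Real.zero_rpow (by positivity), zero_mul, mul_zero]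
  rcases eq_or_lt_of_le hx.2 with h1 | h1
  · rw [h1, sub_self, Real.sqrt_zero, div_zero, sub_self,
      Real.zero_rpow (by norm_num), mul_zero, mul_zero]
  · have hxq : 0 < q₀ - x := by linarith
    have hd : 1/x - 1/q₀ = (q₀ - x)/(x*q₀) := by field_simp
    have hs : Real.sqrt (1/x - 1/q₀) = Real.sqrt (q₀-x)/(Real.sqrt x * Real.sqrt q₀) := by
      rw [hd, Real.sqrt_div hxq.le, Real.sqrt_mul h0.le]
    have hr1 : x ^ ((k : ℝ) + 1/2) = x ^ k * Real.sqrt x := by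
      rw [Real.rpow_add h0, Real.rpow_natCast, Real.sqrt_eq_rpow]
    have hr2 : (q₀ - x) ^ (-(1/2) : ℝ) = (Real.sqrt (q₀-x))⁻¹ := by
      rw [Real.rpow_neg hxq.le, Real.sqrt_eq_rpow]
    rw [hs, hr1, hr2]
    have p1 : 0 < Real.sqrt x := Real.sqrt_pos.mpr h0
    have p2 : 0 < Real.sqrt q₀ := Real.sqrt_pos.mpr hq₀
    have p3 : 0 < Real.sqrt (q₀-x) := Real.sqrt_pos.mpr hxq
    field_simp

theorem mean_free_fall_ratio_newton (q₀ : ℝ) (hq₀ : 0 < q₀) :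
    (∫ q in (0:ℝ)..q₀, q / Real.sqrt (1 / q - 1 / q₀)) /
      (∫ q in (0:ℝ)..q₀, 1 / Real.sqrt (1 / q - 1 / q₀)) = (3 / 4) * q₀ := by
  have e1 : (∫ q in (0:ℝ)..q₀, q / Real.sqrt (1 / q - 1 / q₀))
      = Real.sqrt q₀ * (q₀ ^ ((5/2 : ℝ) - 1/2) * (Complex.betaIntegral ((5/2:ℝ) : ℂ) (1/2)).re) := by
    rw [show (∫ q in (0:ℝ)..q₀, q / Real.sqrt (1 / q - 1 / q₀))
        = ∫ q in (0:ℝ)..q₀, Real.sqrt q₀ * (q ^ ((5/2:ℝ) - 1) * (q₀ - q) ^ (-(1/2) : ℝ)) from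
      intervalIntegral.integral_congr fun x hx => by
        rw [uIcc_of_le hq₀.le] at hx
        have := pointwise_integrand' q₀ hq₀ 1 hx
        rw [pow_one] at this
        rw [show ((5/2:ℝ) - 1) = (1:ℕ) + 1/2 by norm_num]
        exact this]
    rw [intervalIntegral.integral_const_mul, beta_real_integral' q₀ hq₀ (5/2)]
  have e0 : (∫ q in (0:ℝ)..q₀, 1 / Real.sqrt (1 / q - 1 / q₀))
      = Real.sqrt q₀ * (q₀ ^ ((3/2 : ℝ) - 1/2) * (Complex.betaIntegral ((3/2:ℝ) : ℂ) (1/2)).re) := by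
    rw [show (∫ q in (0:ℝ)..q₀, 1 / Real.sqrt (1 / q - 1 / q₀))
        = ∫ q in (0:ℝ)..q₀, Real.sqrt q₀ * (q ^ ((3/2:ℝ) - 1) * (q₀ - q) ^ (-(1/2) : ℝ)) from
      intervalIntegral.integral_congr fun x hx => by
        rw [uIcc_of_le hq₀.le] at hx
        have := pointwise_integrand' q₀ hq₀ 0 hx
        rw [pow_zero] at this
        rw [show ((3/2:ℝ) - 1) = (0:ℕ) + 1/2 by norm_num]
        exact this]
    rw [intervalIntegral.integral_const_mul, beta_real_integral' q₀ hq₀ (3/2)]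
  have b1 : (Complex.betaIntegral ((5/2:ℝ) : ℂ) (1/2)).re = 3 * π / 8 := by
    rw [show (((5/2:ℝ)) : ℂ) = 5/2 by norm_num, beta52',
      show 3 * (π:ℂ)/8 = ((3 * π / 8 : ℝ) : ℂ) by push_cast; ring, Complex.ofReal_re]
  have b0 : (Complex.betaIntegral ((3/2:ℝ) : ℂ) (1/2)).re = π / 2 := by
    rw [show (((3/2:ℝ)) : ℂ) = 3/2 by norm_num, beta32',
      show (π:ℂ)/2 = ((π / 2 : ℝ) : ℂ) by push_cast; ring, Complex.ofReal_re]
  rw [e1, e0, b1, b0,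
    show (5/2:ℝ) - 1/2 = (2:ℕ) by norm_num, show (3/2:ℝ) - 1/2 = (1:ℕ) by norm_num,
    Real.rpow_natCast, Real.rpow_natCast, pow_one]
  have hs : Real.sqrt q₀ ≠ 0 := (Real.sqrt_pos.mpr hq₀).ne'
  have hπ : (π : ℝ) ≠ 0 := Real.pi_ne_zero
  field_simp
  ring
end

section
/- For the potential f₂(q) = -1/q² and any q₀ > 0, the ratio of the average position to the initial position of the free fall equals π/4; concretely, (∫₀^{q₀} q/√(1/q² - 1/q₀²) dq) / (∫₀^{q₀} 1/√(1/q² - 1/q₀²) dq) = (π/4)·q₀. -/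
open Set Real intervalIntegral

/-!
For `0 ≤ q ≤ q₀` we have `1 / √(1/q² - 1/q₀²) = q q₀ / √(q₀² - q²)`, so the two integrals are
`q₀ ∫₀^{q₀} q² / √(q₀² - q²) dq = π q₀³ / 4` and `q₀ ∫₀^{q₀} q / √(q₀² - q²) dq = q₀²`, with the
antiderivatives `(q₀²/2) arcsin (q/q₀) - (q/2) √(q₀² - q²)` and `-√(q₀² - q²)`. The integrands
blow up at `q₀`, but as nonnegative derivatives of functions continuous on `[0, q₀]` they are
integrable there.
-/

theorem integral_eq_sub_of_hasDerivAt_of_nonneg {g g' : ℝ → ℝ} {a b : ℝ} (hab : a ≤ b)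
    (hcont : ContinuousOn g (Icc a b)) (hderiv : ∀ x ∈ Ioo a b, HasDerivAt g (g' x) x)
    (hpos : ∀ x ∈ Ioo a b, 0 ≤ g' x) :
    ∫ x in a..b, g' x = g b - g a :=
  integral_eq_sub_of_hasDerivAt_of_le hab hcont hderiv <|
    intervalIntegrable_deriv_of_nonneg (by rwa [uIcc_of_le hab])
      (by simpa [hab] using hderiv) (by simpa [hab] using hpos)

theorem hasDerivAt_sqrt_sq_sub_sq {R x : ℝ} (hx : x ^ 2 ≠ R ^ 2) :
    HasDerivAt (fun q => √(R ^ 2 - q ^ 2)) (-x / √(R ^ 2 - x ^ 2)) x := by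
  have hsub : HasDerivAt (fun q => R ^ 2 - q ^ 2) (-(2 * x)) x := by
    simpa using (hasDerivAt_pow 2 x).const_sub (R ^ 2)
  refine ((hasDerivAt_sqrt (sub_ne_zero.2 hx.symm)).comp x hsub).congr_deriv ?_
  field_simp

theorem hasDerivAt_arcsin_sub_mul_sqrt {R x : ℝ} (hR : 0 < R) (hx : x ∈ Ioo (-R) R) :
    HasDerivAt (fun q => R ^ 2 / 2 * arcsin (q / R) - q / 2 * √(R ^ 2 - q ^ 2))
      (x ^ 2 / √(R ^ 2 - x ^ 2)) x := by
  have hpos : 0 < R ^ 2 - x ^ 2 := by nlinarith [hx.1, hx.2]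
  have hsqrt_one_sub : √(1 - (x / R) ^ 2) = √(R ^ 2 - x ^ 2) / R := by
    rw [show 1 - (x / R) ^ 2 = (R ^ 2 - x ^ 2) / R ^ 2 by field_simp,
      sqrt_div' _ (sq_nonneg R), sqrt_sq hR.le]
  have harcsin : HasDerivAt (fun q => arcsin (q / R)) (1 / √(1 - (x / R) ^ 2) * (1 / R)) x := by
    have hx' : x / R ∈ Ioo (-1) 1 := by
      constructor
      · rw [lt_div_iff₀ hR]; linarith [hx.1]
      · rw [div_lt_one hR]; exact hx.2
    simpa [Function.comp_def] using
      (hasDerivAt_arcsin hx'.1.ne' hx'.2.ne).comp x ((hasDerivAt_id x).div_const R)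
  have hsqrt := hasDerivAt_sqrt_sq_sub_sq (sub_ne_zero.1 hpos.ne').symm
  refine ((harcsin.const_mul (R ^ 2 / 2)).sub
    (((hasDerivAt_id x).div_const 2).mul hsqrt)).congr_deriv ?_
  rw [hsqrt_one_sub, id]
  field_simp
  linear_combination -sq_sqrt hpos.le

theorem integral_div_sqrt_sq_sub_sq {R : ℝ} (hR : 0 ≤ R) :
    ∫ q in (0 : ℝ)..R, q / √(R ^ 2 - q ^ 2) = R := by
  rw [integral_eq_sub_of_hasDerivAt_of_nonneg hR (by fun_prop)
    (fun x hx => (hasDerivAt_sqrt_sq_sub_sq (by nlinarith [hx.1, hx.2])).neg.congr_deriv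
      (by rw [neg_div, neg_neg]))
    (fun x hx => div_nonneg hx.1.le (sqrt_nonneg _))]
  simp [sqrt_sq hR]

theorem integral_sq_div_sqrt_sq_sub_sq {R : ℝ} (hR : 0 < R) :
    ∫ q in (0 : ℝ)..R, q ^ 2 / √(R ^ 2 - q ^ 2) = π * R ^ 2 / 4 := by
  rw [integral_eq_sub_of_hasDerivAt_of_nonneg hR.le (by fun_prop)
    (fun x hx => hasDerivAt_arcsin_sub_mul_sqrt hR ⟨by linarith [hx.1], hx.2⟩)
    (fun x _ => by positivity)]
  rw [div_self hR.ne', sub_self, sqrt_zero, zero_div, arcsin_one, arcsin_zero]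
  ring

/-- Also true at `q = 0` and for `q ≥ R`, where both sides are `0` since `1 / 0 = 0` and `√` of a
negative number is `0`. -/
theorem one_div_sqrt_inv_sq_sub_inv_sq {R q : ℝ} (hR : 0 < R) (hq : 0 ≤ q) :
    1 / √(1 / q ^ 2 - 1 / R ^ 2) = q * R / √(R ^ 2 - q ^ 2) := by
  rcases hq.eq_or_lt with rfl | hq
  · simp [sqrt_eq_zero', hR.le]
  rw [show 1 / q ^ 2 - 1 / R ^ 2 = (R ^ 2 - q ^ 2) / (q * R) ^ 2 by field_simp,
    sqrt_div' _ (sq_nonneg _), sqrt_sq (by positivity), one_div_div]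

theorem mean_free_fall_ratio_inverse_square (q₀ : ℝ) (hq₀ : 0 < q₀) :
    (∫ q in (0:ℝ)..q₀, q / Real.sqrt (1 / q ^ 2 - 1 / q₀ ^ 2)) /
      (∫ q in (0:ℝ)..q₀, 1 / Real.sqrt (1 / q ^ 2 - 1 / q₀ ^ 2)) =
    (Real.pi / 4) * q₀ := by
  have hnum : ∫ q in (0:ℝ)..q₀, q / √(1 / q ^ 2 - 1 / q₀ ^ 2)
      = q₀ * ∫ q in (0:ℝ)..q₀, q ^ 2 / √(q₀ ^ 2 - q ^ 2) := by
    rw [← integral_const_mul]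
    refine integral_congr fun q hq => ?_
    simp only [div_eq_mul_one_div q,
      one_div_sqrt_inv_sq_sub_inv_sq hq₀ (uIcc_of_le hq₀.le ▸ hq).1]
    ring
  have hden : ∫ q in (0:ℝ)..q₀, 1 / √(1 / q ^ 2 - 1 / q₀ ^ 2)
      = q₀ * ∫ q in (0:ℝ)..q₀, q / √(q₀ ^ 2 - q ^ 2) := by
    rw [← integral_const_mul]
    refine integral_congr fun q hq => ?_
    simp only [one_div_sqrt_inv_sq_sub_inv_sq hq₀ (uIcc_of_le hq₀.le ▸ hq).1]
    ring
  rw [hnum, hden, integral_sq_div_sqrt_sq_sub_sq hq₀, integral_div_sqrt_sq_sub_sq hq₀.le]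
  field_simp
end
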